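/- arXiv:2605.21015 — 7 statements merged into one kernel-verified Lean document; each statement's English description precedes it below -/
import Mathlib

section
/- In the 2m×2m toroidal grid T, if M is the m-boundary of a vertex c, then T - M (the induced subgraph on the complement of M) has exactly two connected components, and their vertex sets are the (m-1)-balls centered at c and at c + (m,m), respectively. -/
/-- The `n × n` toroidal grid: vertices are pairs in `(ZMod n)²`, adjacent when
they differ by `(1,0)` or `(0,1)` modulo `n`. -/
def torus (n : ℕ) : SimpleGraph (ZMod n × ZMod n) :=
  SimpleGraph.fromRel (fun v w => w - v = (1, 0) ∨ w - v = (0, 1))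

/-- The open neighborhood of a vertex set `S` in a graph `G`. -/
def nbhd {V : Type*} (G : SimpleGraph V) (S : Set V) : Set V :=
  {v | v ∉ S ∧ ∃ u ∈ S, G.Adj u v}

namespace TorusAux

def t (n : ℕ) (z : ZMod n) : ℕ := min z.val (n - z.val)

def D (n : ℕ) (v w : ZMod n × ZMod n) : ℕ := t n (w.1 - v.1) + t n (w.2 - v.2)

variable {n : ℕ}

lemma t_zero [NeZero n] : t n 0 = 0 := by simp [t]

lemma t_eq_zero_iff [NeZero n] (z : ZMod n) : t n z = 0 ↔ z = 0 := by
  have h := ZMod.val_lt z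
  rw [← ZMod.val_eq_zero]
  unfold t; omega

lemma t_neg [NeZero n] (z : ZMod n) : t n (-z) = t n z := by
  rcases eq_or_ne z 0 with rfl | hz
  · simp
  · have h := ZMod.val_lt z
    have h0 : z.val ≠ 0 := by rwa [ne_eq, ZMod.val_eq_zero]
    unfold t
    rw [ZMod.neg_val, if_neg hz]
    omega

lemma t_add_one (hn : 2 ≤ n) (z : ZMod n) : t n (z + 1) ≤ t n z + 1 := by
  haveI : NeZero n := ⟨by omega⟩
  haveI : Fact (1 < n) := ⟨by omega⟩
  have h := ZMod.val_lt z
  have hv : (z + 1).val = (z.val + 1) % n := by rw [ZMod.val_add, ZMod.val_one]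
  have hmod : (z.val + 1) % n = z.val + 1 ∨ (z.val + 1) % n = 0 := by
    rcases Nat.lt_or_ge (z.val + 1) n with h' | h'
    · exact Or.inl (Nat.mod_eq_of_lt h')
    · right; have : z.val + 1 = n := by omega
      rw [this, Nat.mod_self]
  unfold t; omega

lemma t_sub_one (hn : 2 ≤ n) (z : ZMod n) : t n (z - 1) ≤ t n z + 1 := by
  haveI : NeZero n := ⟨by omega⟩
  have h1 : t n (z - 1) = t n (-z + 1) := by rw [← t_neg (z - 1)]; ring_nf
  rw [h1, ← t_neg z]
  exact t_add_one hn (-z)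

lemma t_step (hn : 2 ≤ n) (z : ZMod n) (hz : z ≠ 0) :
    t n (z - 1) + 1 = t n z ∨ t n (z + 1) + 1 = t n z := by
  haveI : NeZero n := ⟨by omega⟩
  haveI : Fact (1 < n) := ⟨by omega⟩
  have h := ZMod.val_lt z
  have h0 : z.val ≠ 0 := by rwa [ne_eq, ZMod.val_eq_zero]
  have hv1 : (z + 1).val = (z.val + 1) % n := by rw [ZMod.val_add, ZMod.val_one]
  have hmod : (z.val + 1) % n = z.val + 1 ∨ ((z.val + 1) % n = 0 ∧ z.val + 1 = n) := by
    rcases Nat.lt_or_ge (z.val + 1) n with h' | h'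
    · exact Or.inl (Nat.mod_eq_of_lt h')
    · right; have he : z.val + 1 = n := by omega
      exact ⟨by rw [he, Nat.mod_self], he⟩
  have hv2 : (z - 1).val = z.val - 1 := by
    have he : z - 1 = z + (-1) := by ring
    rw [he, ZMod.val_add, ZMod.neg_val, if_neg (one_ne_zero), ZMod.val_one]
    have he2 : z.val + (n - 1) = (z.val - 1) + n := by omega
    rw [he2, Nat.add_mod_right, Nat.mod_eq_of_lt (by omega)]
  unfold t; omega

lemma t_le (m : ℕ) (hm : 1 ≤ m) (z : ZMod (2 * m)) : t (2 * m) z ≤ m := by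
  haveI : NeZero (2 * m) := ⟨by omega⟩
  have h := ZMod.val_lt z
  unfold t; omega

lemma t_add_m (m : ℕ) (hm : 1 ≤ m) (z : ZMod (2 * m)) :
    t (2 * m) (z + (m : ZMod (2 * m))) = m - t (2 * m) z := by
  haveI : NeZero (2 * m) := ⟨by omega⟩
  have h := ZMod.val_lt z
  have hmv : ((m : ℕ) : ZMod (2 * m)).val = m := ZMod.val_cast_of_lt (by omega)
  have hv : (z + (m : ZMod (2 * m))).val = (z.val + m) % (2 * m) := by
    rw [ZMod.val_add, hmv]
  have hmod : ((z.val + m) % (2 * m) = z.val + m ∧ z.val < m) ∨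
      ((z.val + m) % (2 * m) = z.val - m ∧ m ≤ z.val) := by
    rcases Nat.lt_or_ge (z.val + m) (2 * m) with h' | h'
    · exact Or.inl ⟨Nat.mod_eq_of_lt h', by omega⟩
    · right
      have he : z.val + m = (z.val - m) + 2 * m := by omega
      rw [he, Nat.add_mod_right, Nat.mod_eq_of_lt (by omega)]
      exact ⟨rfl, by omega⟩
  unfold t
  rw [hv]
  rcases hmod with ⟨h', h''⟩ | ⟨h', h''⟩ <;> rw [h'] <;>
    simp only [Nat.min_def] <;> split_ifs <;> omega

lemma D_comm [NeZero n] (v w : ZMod n × ZMod n) : D n v w = D n w v := by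
  unfold D
  rw [← t_neg (v.1 - w.1), ← t_neg (v.2 - w.2), neg_sub, neg_sub]

lemma D_self [NeZero n] (v : ZMod n × ZMod n) : D n v v = 0 := by
  simp [D, t_zero]

lemma D_eq_zero [NeZero n] {v w : ZMod n × ZMod n} (h : D n v w = 0) : w = v := by
  unfold D at h
  have h1 : w.1 - v.1 = 0 := (t_eq_zero_iff _).mp (by omega)
  have h2 : w.2 - v.2 = 0 := (t_eq_zero_iff _).mp (by omega)
  exact Prod.ext (by rw [← sub_eq_zero]; exact h1) (by rw [← sub_eq_zero]; exact h2)

lemma adj_of_sub (hn : 2 ≤ n) {v w : ZMod n × ZMod n}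
    (h : w - v = (1, 0) ∨ w - v = (0, 1) ∨ v - w = (1, 0) ∨ v - w = (0, 1)) :
    (torus n).Adj v w := by
  haveI : Fact (1 < n) := ⟨by omega⟩
  have hne : v ≠ w := by
    rintro rfl
    simp [Prod.ext_iff] at h
  simp only [torus, SimpleGraph.fromRel_adj]
  exact ⟨hne, by tauto⟩

lemma adj_cases {v w : ZMod n × ZMod n} (h : (torus n).Adj v w) :
    w - v = (1, 0) ∨ w - v = (0, 1) ∨ v - w = (1, 0) ∨ v - w = (0, 1) := by
  simp only [torus, SimpleGraph.fromRel_adj] at h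
  tauto

lemma D_lipschitz (hn : 2 ≤ n) {c u v : ZMod n × ZMod n} (h : (torus n).Adj u v) :
    D n c v ≤ D n c u + 1 := by
  haveI : NeZero n := ⟨by omega⟩
  rcases adj_cases h with h' | h' | h' | h'
  · have h1 : v.1 - c.1 = (u.1 - c.1) + 1 := by
      have := congrArg Prod.fst h'; simp at this; rw [← this]; ring
    have h2 : v.2 - c.2 = u.2 - c.2 := by
      have := congrArg Prod.snd h'; simp at this
      rw [sub_eq_zero] at this; rw [this]
    unfold D; rw [h1, h2]
    have := t_add_one hn (u.1 - c.1); omega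
  · have h1 : v.1 - c.1 = u.1 - c.1 := by
      have := congrArg Prod.fst h'; simp at this
      rw [sub_eq_zero] at this; rw [this]
    have h2 : v.2 - c.2 = (u.2 - c.2) + 1 := by
      have := congrArg Prod.snd h'; simp at this; rw [← this]; ring
    unfold D; rw [h1, h2]
    have := t_add_one hn (u.2 - c.2); omega
  · have h1 : v.1 - c.1 = (u.1 - c.1) - 1 := by
      have := congrArg Prod.fst h'; simp at this
      rw [show (1 : ZMod n) = u.1 - v.1 from this.symm]; ring
    have h2 : v.2 - c.2 = u.2 - c.2 := by
      have := congrArg Prod.snd h'; simp at this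
      rw [sub_eq_zero] at this; rw [← this]
    unfold D; rw [h1, h2]
    have := t_sub_one hn (u.1 - c.1); omega
  · have h1 : v.1 - c.1 = u.1 - c.1 := by
      have := congrArg Prod.fst h'; simp at this
      rw [sub_eq_zero] at this; rw [← this]
    have h2 : v.2 - c.2 = (u.2 - c.2) - 1 := by
      have := congrArg Prod.snd h'; simp at this
      rw [show (1 : ZMod n) = u.2 - v.2 from this.symm]; ring
    unfold D; rw [h1, h2]
    have := t_sub_one hn (u.2 - c.2); omega

lemma D_step (hn : 2 ≤ n) (v w : ZMod n × ZMod n) (h : D n v w ≠ 0) :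
    ∃ v', (torus n).Adj v v' ∧ D n v' w + 1 = D n v w := by
  haveI : NeZero n := ⟨by omega⟩
  rcases eq_or_ne (w.1 - v.1) 0 with h1 | h1
  · -- first coord zero, so second nonzero
    have h2 : w.2 - v.2 ≠ 0 := by
      intro h2
      apply h
      unfold D
      rw [h1, h2, t_zero]
    rcases t_step hn _ h2 with hs | hs
    · refine ⟨(v.1, v.2 + 1), adj_of_sub hn (Or.inr (Or.inl ?_)), ?_⟩
      · ext <;> simp <;> ring
      · unfold D at *
        have e1 : w.1 - (v.1, v.2 + 1).1 = w.1 - v.1 := rfl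
        have e2 : w.2 - (v.1, v.2 + 1).2 = (w.2 - v.2) - 1 := by simp; ring
        rw [e1, e2]; omega
    · refine ⟨(v.1, v.2 - 1), adj_of_sub hn (Or.inr (Or.inr (Or.inr ?_))), ?_⟩
      · ext <;> simp <;> ring
      · unfold D at *
        have e2 : w.2 - (v.1, v.2 - 1).2 = (w.2 - v.2) + 1 := by simp; ring
        rw [show w.1 - (v.1, v.2 - 1).1 = w.1 - v.1 from rfl, e2]; omega
  · rcases t_step hn _ h1 with hs | hs
    · refine ⟨(v.1 + 1, v.2), adj_of_sub hn (Or.inl ?_), ?_⟩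
      · ext <;> simp <;> ring
      · unfold D at *
        have e1 : w.1 - (v.1 + 1, v.2).1 = (w.1 - v.1) - 1 := by simp; ring
        rw [e1, show w.2 - (v.1 + 1, v.2).2 = w.2 - v.2 from rfl]; omega
    · refine ⟨(v.1 - 1, v.2), adj_of_sub hn (Or.inr (Or.inr (Or.inl ?_))), ?_⟩
      · ext <;> simp <;> ring
      · unfold D at *
        have e1 : w.1 - (v.1 - 1, v.2).1 = (w.1 - v.1) + 1 := by simp; ring
        rw [e1, show w.2 - (v.1 - 1, v.2).2 = w.2 - v.2 from rfl]; omega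

lemma exists_walk (hn : 2 ≤ n) :
    ∀ (k : ℕ) (v w : ZMod n × ZMod n), D n v w = k →
      ∃ p : (torus n).Walk v w, p.length = k := by
  haveI : NeZero n := ⟨by omega⟩
  intro k
  induction k with
  | zero =>
    intro v w h
    have : w = v := D_eq_zero h
    subst this
    exact ⟨SimpleGraph.Walk.nil, rfl⟩
  | succ k ih =>
    intro v w h
    obtain ⟨v', hadj, hd⟩ := D_step hn v w (by omega)
    obtain ⟨p, hp⟩ := ih v' w (by omega)
    exact ⟨SimpleGraph.Walk.cons hadj p, by simp [hp]⟩

lemma D_le_walk (hn : 2 ≤ n) {v w : ZMod n × ZMod n} (p : (torus n).Walk v w) :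
    D n v w ≤ p.length := by
  haveI : NeZero n := ⟨by omega⟩
  induction p with
  | nil => simp [D_self]
  | @cons a b c' h q ih =>
    simp only [SimpleGraph.Walk.length_cons]
    have h1 : D n a c' ≤ D n b c' + 1 := by
      have h2 := D_lipschitz hn (c := c') h.symm
      rw [D_comm c' a, D_comm c' b] at h2
      exact h2
    omega

lemma dist_eq (hn : 2 ≤ n) (v w : ZMod n × ZMod n) :
    (torus n).dist v w = D n v w := by
  obtain ⟨p, hp⟩ := exists_walk hn (D n v w) v w rfl
  refine le_antisymm (hp ▸ SimpleGraph.dist_le p) ?_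
  obtain ⟨q, hq⟩ := (SimpleGraph.Walk.reachable p).exists_walk_length_eq_dist
  rw [← hq]
  exact D_le_walk hn q

end TorusAux

open TorusAux in
theorem boundary_complement_two_balls (m : ℕ) (hm : 1 ≤ m)
    (c : ZMod (2 * m) × ZMod (2 * m))
    (M : Set (ZMod (2 * m) × ZMod (2 * m)))
    (hM : M = {v | (torus (2 * m)).dist c v = m}) :
    ∃ C₁ C₂ : ((torus (2 * m)).induce Mᶜ).ConnectedComponent,
      C₁ ≠ C₂ ∧ (∀ C : ((torus (2 * m)).induce Mᶜ).ConnectedComponent, C = C₁ ∨ C = C₂) ∧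
      Subtype.val '' C₁.supp = {v | (torus (2 * m)).dist c v ≤ m - 1} ∧
      Subtype.val '' C₂.supp =
        {v | (torus (2 * m)).dist (c + ((m : ZMod (2 * m)), (m : ZMod (2 * m)))) v ≤ m - 1} := by
  have hn : 2 ≤ 2 * m := by omega
  haveI : NeZero (2 * m) := ⟨by omega⟩
  set c' : ZMod (2 * m) × ZMod (2 * m) := c + ((m : ZMod (2 * m)), (m : ZMod (2 * m))) with hc'def
  have hdist : ∀ v w : ZMod (2 * m) × ZMod (2 * m),
      (torus (2 * m)).dist v w = D (2 * m) v w := dist_eq hn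
  have hm0 : (m : ZMod (2 * m)) + (m : ZMod (2 * m)) = 0 := by
    rw [← Nat.cast_add, show m + m = 2 * m by ring, ZMod.natCast_self]
  have hmneg : -(m : ZMod (2 * m)) = (m : ZMod (2 * m)) := neg_eq_of_add_eq_zero_left hm0
  have hDle : ∀ v, D (2 * m) c v ≤ 2 * m := by
    intro v
    have h1 := t_le m hm (v.1 - c.1)
    have h2 := t_le m hm (v.2 - c.2)
    unfold D; omega
  have hant : ∀ v, D (2 * m) c' v = 2 * m - D (2 * m) c v := by
    intro v
    have e1 : v.1 - c'.1 = (v.1 - c.1) + (m : ZMod (2 * m)) := by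
      have : v.1 - c'.1 = (v.1 - c.1) + -(m : ZMod (2 * m)) := by
        simp only [hc'def, Prod.fst_add]; ring
      rw [this, hmneg]
    have e2 : v.2 - c'.2 = (v.2 - c.2) + (m : ZMod (2 * m)) := by
      have : v.2 - c'.2 = (v.2 - c.2) + -(m : ZMod (2 * m)) := by
        simp only [hc'def, Prod.snd_add]; ring
      rw [this, hmneg]
    have h1 := t_le m hm (v.1 - c.1)
    have h2 := t_le m hm (v.2 - c.2)
    unfold D
    rw [e1, e2, t_add_m m hm, t_add_m m hm]
    omega
  have hMc : ∀ v, v ∈ Mᶜ ↔ D (2 * m) c v ≠ m := by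
    intro v
    rw [hM]
    simp [Set.mem_compl_iff, Set.mem_setOf_eq, hdist]
  -- reachability within a ball
  have key : ∀ (z : ZMod (2 * m) × ZMod (2 * m)) (hz : ∀ u, D (2 * m) z u < m → u ∈ Mᶜ)
      (k : ℕ) (v : ZMod (2 * m) × ZMod (2 * m)) (hv : D (2 * m) z v < m),
      D (2 * m) z v = k →
      ((torus (2 * m)).induce Mᶜ).Reachable ⟨v, hz v hv⟩
        ⟨z, hz z (by rw [D_self]; omega)⟩ := by
    intro z hz k
    induction k with
    | zero =>
      intro v hv hk
      have hvz : v = z := D_eq_zero hk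
      subst hvz
      exact SimpleGraph.Reachable.refl _
    | succ k ih =>
      intro v hv hk
      obtain ⟨v', hadj, hd⟩ := D_step hn v z (by rw [D_comm]; omega)
      have hzv' : D (2 * m) z v' = k := by
        have e1 := D_comm v' z
        have e2 := D_comm v z
        omega
      have hv' : D (2 * m) z v' < m := by omega
      have hadj' : ((torus (2 * m)).induce Mᶜ).Adj ⟨v, hz v hv⟩ ⟨v', hz v' hv'⟩ := hadj
      exact hadj'.reachable.trans (ih v' hv' hzv')
  -- invariance of balls along walks in the induced graph
  have inv : ∀ (z : ZMod (2 * m) × ZMod (2 * m))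
      (hzb : ∀ u : {x // x ∈ Mᶜ}, D (2 * m) z u.val ≠ m)
      (a x : {x // x ∈ Mᶜ}) (p : ((torus (2 * m)).induce Mᶜ).Walk a x),
      D (2 * m) z a.val < m → D (2 * m) z x.val < m := by
    intro z hzb a x p
    induction p with
    | nil => exact id
    | @cons a' b' x' hadj q ih =>
      intro ha
      apply ih
      have hadj2 : (torus (2 * m)).Adj a'.val b'.val := hadj
      have h2 : D (2 * m) z b'.val ≤ D (2 * m) z a'.val + 1 := D_lipschitz hn hadj2
      have h3 := hzb b'
      omega
  have hcM : c ∈ Mᶜ := (hMc c).mpr (by rw [D_self]; omega)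
  have hDcc' : D (2 * m) c c' = 2 * m := by
    rw [D_comm, hant, D_self]
    omega
  have hc'M : c' ∈ Mᶜ := (hMc c').mpr (by rw [hDcc']; omega)
  have hzc : ∀ u, D (2 * m) c u < m → u ∈ Mᶜ := fun u h => (hMc u).mpr (by omega)
  have hzc' : ∀ u, D (2 * m) c' u < m → u ∈ Mᶜ := by
    intro u h
    have h1 := hant u
    have h2 := hDle u
    exact (hMc u).mpr (by omega)
  have hzb : ∀ u : {x // x ∈ Mᶜ}, D (2 * m) c u.val ≠ m := fun u => (hMc u.val).mp u.2
  have hzb' : ∀ u : {x // x ∈ Mᶜ}, D (2 * m) c' u.val ≠ m := by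
    intro u
    have h1 := hant u.val
    have h2 := hDle u.val
    have h3 := (hMc u.val).mp u.2
    omega
  refine ⟨((torus (2 * m)).induce Mᶜ).connectedComponentMk ⟨c, hcM⟩,
    ((torus (2 * m)).induce Mᶜ).connectedComponentMk ⟨c', hc'M⟩, ?_, ?_, ?_, ?_⟩
  · -- C₁ ≠ C₂
    intro h
    obtain ⟨p⟩ := SimpleGraph.ConnectedComponent.exact h
    have h2 : D (2 * m) c c' < m := inv c hzb _ _ p (by rw [D_self]; omega)
    omega
  · -- completeness
    intro C
    obtain ⟨⟨v, hvM⟩, rfl⟩ := C.exists_rep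
    have hvne := (hMc v).mp hvM
    rcases Nat.lt_or_ge (D (2 * m) c v) m with hlt | hge
    · exact Or.inl (SimpleGraph.ConnectedComponent.sound (key c hzc _ v hlt rfl))
    · have hgt : m < D (2 * m) c v := by omega
      have hlt' : D (2 * m) c' v < m := by
        have h1 := hant v
        have h2 := hDle v
        omega
      exact Or.inr (SimpleGraph.ConnectedComponent.sound (key c' hzc' _ v hlt' rfl))
  · -- supp C₁
    ext v
    simp only [Set.mem_image, SimpleGraph.ConnectedComponent.mem_supp_iff, Set.mem_setOf_eq,
      hdist]
    constructor
    · rintro ⟨⟨u, huM⟩, hu, rfl⟩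
      obtain ⟨p⟩ := (SimpleGraph.ConnectedComponent.exact hu).symm
      have := inv c hzb _ _ p (by rw [D_self]; omega)
      omega
    · intro hv
      have hvlt : D (2 * m) c v < m := by omega
      exact ⟨⟨v, hzc v hvlt⟩,
        SimpleGraph.ConnectedComponent.sound (key c hzc _ v hvlt rfl), rfl⟩
  · -- supp C₂
    ext v
    simp only [Set.mem_image, SimpleGraph.ConnectedComponent.mem_supp_iff, Set.mem_setOf_eq,
      hdist]
    constructor
    · rintro ⟨⟨u, huM⟩, hu, rfl⟩
      obtain ⟨p⟩ := (SimpleGraph.ConnectedComponent.exact hu).symm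
      have := inv c' hzb' _ _ p (by rw [D_self]; omega)
      omega
    · intro hv
      have hvlt : D (2 * m) c' v < m := by omega
      exact ⟨⟨v, hzc' v hvlt⟩,
        SimpleGraph.ConnectedComponent.sound (key c' hzc' _ v hvlt rfl), rfl⟩
end

section
/- For integers m ≥ 3, let B be the (m-1)-ball centered at a vertex c in the 2m×2m toroidal grid T. Then the set of cut vertices of the induced subgraph T[B] is exactly {c + (m-2,0), c + (-(m-2),0), c + (0,m-2), c + (0,-(m-2))}. -/
namespace TorusCut
open SimpleGraph

variable {m : ℕ}

/-- cyclic distance to 0 -/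
def dd {n : ℕ} (x : ZMod n) : ℕ := min x.val (n - x.val)

lemma dd_zero (hm : 3 ≤ m) : dd (0 : ZMod (2*m)) = 0 := by
  haveI : NeZero (2*m) := ⟨by omega⟩
  simp [dd, ZMod.val_zero]

lemma emod_cases (hm : 3 ≤ m) (a : ℤ) (h1 : -(m:ℤ) ≤ a) (h2 : a ≤ m) :
    a % ((2*m : ℕ) : ℤ) = a ∨ a % ((2*m : ℕ) : ℤ) = a + 2*m := by
  rcases le_or_gt 0 a with h0 | h0
  · left; exact Int.emod_eq_of_lt h0 (by push_cast; omega)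
  · right
    have e : a % ((2*m:ℕ):ℤ) = (a + ((2*m:ℕ):ℤ) * 1) % ((2*m:ℕ):ℤ) := by
      rw [Int.add_mul_emod_self_left]
    rw [e, Int.emod_eq_of_lt (by push_cast; omega) (by push_cast; omega)]
    push_cast; ring

lemma dd_intCast (hm : 3 ≤ m) (a : ℤ) (ha : a.natAbs ≤ m) :
    dd ((a : ZMod (2*m))) = a.natAbs := by
  haveI : NeZero (2*m) := ⟨by omega⟩
  have hv : (((a : ZMod (2*m)).val : ℤ)) = a % ((2*m:ℕ):ℤ) := ZMod.val_intCast a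
  have hlt : ((a : ZMod (2*m))).val < 2*m := ZMod.val_lt _
  rcases emod_cases hm a (by omega) (by omega) with hc | hc <;> rw [hc] at hv <;>
    · unfold dd; omega

lemma castInj (hm : 3 ≤ m) {a b : ℤ} (h : (a - b).natAbs < 2*m) :
    ((a : ZMod (2*m)) = (b : ZMod (2*m))) ↔ a = b := by
  constructor
  · intro h'
    have hd : ((2*m : ℕ) : ℤ) ∣ b - a := Int.ModEq.dvd ((ZMod.intCast_eq_intCast_iff _ _ _).mp h')
    have := Int.eq_zero_of_abs_lt_dvd hd (by rw [abs_lt]; constructor <;> push_cast <;> omega)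
    omega
  · rintro rfl; rfl

lemma rep (hm : 3 ≤ m) (x : ZMod (2*m)) :
    ∃ a : ℤ, (a : ZMod (2*m)) = x ∧ a.natAbs ≤ m ∧ a.natAbs = dd x := by
  haveI : NeZero (2*m) := ⟨by omega⟩
  have hlt : x.val < 2*m := ZMod.val_lt _
  rcases le_or_gt x.val m with h | h
  · refine ⟨x.val, ?_, by omega, by unfold dd; omega⟩
    rw [Int.cast_natCast, ZMod.natCast_val, ZMod.cast_id]
  · refine ⟨(x.val : ℤ) - 2*m, ?_, by omega, by unfold dd; omega⟩
    push_cast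
    rw [ZMod.natCast_val, ZMod.cast_id]
    have h0 : ((2*m:ℕ) : ZMod (2*m)) = 0 := ZMod.natCast_self _
    push_cast at h0
    rw [h0, sub_zero]

end TorusCut

section
variable {m : ℕ}
open SimpleGraph

lemma TorusCut.one_ne_zero' (hm : 3 ≤ m) : (1 : ZMod (2*m)) ≠ 0 := by
  haveI : NeZero (2*m) := ⟨by omega⟩
  haveI : Fact (1 < 2*m) := ⟨by omega⟩
  intro h
  have := congrArg ZMod.val h
  rw [ZMod.val_one, ZMod.val_zero] at this
  omega

lemma TorusCut.adj_unit (hm : 3 ≤ m) (u : ZMod (2*m) × ZMod (2*m)) (e : ZMod (2*m) × ZMod (2*m))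
    (he : e = (1,0) ∨ e = (-1,0) ∨ e = (0,1) ∨ e = (0,-1)) :
    (torus (2*m)).Adj u (u + e) := by
  have h1 : (1 : ZMod (2*m)) ≠ 0 := TorusCut.one_ne_zero' hm
  rw [torus, SimpleGraph.fromRel_adj]
  constructor
  · intro h
    have he0 : e = 0 := by
      have := congrArg (· - u) h
      simpa using this.symm
    rcases he with rfl | rfl | rfl | rfl
    · exact h1 (congrArg Prod.fst he0)
    · exact h1 (by have := congrArg Prod.fst he0; simpa [neg_eq_zero] using this)
    · exact h1 (congrArg Prod.snd he0)
    · exact h1 (by have := congrArg Prod.snd he0; simpa [neg_eq_zero] using this)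
  · have hsub : u + e - u = e := by ring
    have hsub2 : u - (u + e) = -e := by ring
    rcases he with rfl | rfl | rfl | rfl
    · exact Or.inl (Or.inl hsub)
    · refine Or.inr (Or.inl ?_)
      rw [hsub2]
      exact Prod.ext (by simp) (by simp)
    · exact Or.inl (Or.inr hsub)
    · refine Or.inr (Or.inr ?_)
      rw [hsub2]
      exact Prod.ext (by simp) (by simp)

lemma TorusCut.adj_cases {u w : ZMod (2*m) × ZMod (2*m)} (h : (torus (2*m)).Adj u w) :
    w = u + (1,0) ∨ w = u + (-1,0) ∨ w = u + (0,1) ∨ w = u + (0,-1) := by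
  rw [torus, SimpleGraph.fromRel_adj] at h
  rcases h.2 with (h' | h') | (h' | h')
  · exact Or.inl (by rw [← h']; ring)
  · refine Or.inr (Or.inr (Or.inl ?_)); rw [← h']; ring
  · refine Or.inr (Or.inl ?_)
    have : w = u - (1,0) := by rw [← h']; ring
    rw [this]
    refine Prod.ext (by simp [sub_eq_add_neg]) (by simp [sub_eq_add_neg])
  · refine Or.inr (Or.inr (Or.inr ?_))
    have : w = u - (0,1) := by rw [← h']; ring
    rw [this]
    refine Prod.ext (by simp [sub_eq_add_neg]) (by simp [sub_eq_add_neg])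

lemma TorusCut.exists_walk (hm : 3 ≤ m) : ∀ (n : ℕ) (a b : ℤ), a.natAbs + b.natAbs = n →
    ∀ u : ZMod (2*m) × ZMod (2*m),
    ∃ p : (torus (2*m)).Walk u (u.1 + (a : ZMod (2*m)), u.2 + (b : ZMod (2*m))), p.length = n := by
  intro n
  induction n with
  | zero =>
    intro a b h u
    have ha : a = 0 := by omega
    have hb : b = 0 := by omega
    subst ha; subst hb
    exact ⟨SimpleGraph.Walk.nil.copy rfl (by simp), by simp⟩
  | succ k ih =>
    intro a b h u
    rcases lt_trichotomy a 0 with ha | ha | ha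
    · have adj := TorusCut.adj_unit hm u (-1,0) (by tauto)
      obtain ⟨p, hp⟩ := ih (a+1) (b) (by omega) (u + (-1,0))
      have hend : ((u + (-1,0)).1 + ((a+1 : ℤ) : ZMod (2*m)), (u + (-1,0)).2 + ((b : ℤ) : ZMod (2*m))) = (u.1 + ((a:ℤ) : ZMod (2*m)), u.2 + ((b:ℤ) : ZMod (2*m))) := by
        refine Prod.ext ?_ ?_ <;> simp <;> push_cast <;> ring
      exact ⟨SimpleGraph.Walk.cons adj (p.copy rfl hend), by simp [hp]⟩
    · subst ha
      rcases lt_trichotomy b 0 with hb | hb | hb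
      · have adj := TorusCut.adj_unit hm u (0,-1) (by tauto)
        obtain ⟨p, hp⟩ := ih (0) (b+1) (by omega) (u + (0,-1))
        have hend : ((u + (0,-1)).1 + ((0 : ℤ) : ZMod (2*m)), (u + (0,-1)).2 + ((b+1 : ℤ) : ZMod (2*m))) = (u.1 + ((0:ℤ) : ZMod (2*m)), u.2 + ((b:ℤ) : ZMod (2*m))) := by
          refine Prod.ext ?_ ?_ <;> simp <;> push_cast <;> ring
        exact ⟨SimpleGraph.Walk.cons adj (p.copy rfl hend), by simp [hp]⟩
      · omega
      · have adj := TorusCut.adj_unit hm u (0,1) (by tauto)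
        obtain ⟨p, hp⟩ := ih (0) (b-1) (by omega) (u + (0,1))
        have hend : ((u + (0,1)).1 + ((0 : ℤ) : ZMod (2*m)), (u + (0,1)).2 + ((b-1 : ℤ) : ZMod (2*m))) = (u.1 + ((0:ℤ) : ZMod (2*m)), u.2 + ((b:ℤ) : ZMod (2*m))) := by
          refine Prod.ext ?_ ?_ <;> simp <;> push_cast <;> ring
        exact ⟨SimpleGraph.Walk.cons adj (p.copy rfl hend), by simp [hp]⟩
    · have adj := TorusCut.adj_unit hm u (1,0) (by tauto)
      obtain ⟨p, hp⟩ := ih (a-1) (b) (by omega) (u + (1,0))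
      have hend : ((u + (1,0)).1 + ((a-1 : ℤ) : ZMod (2*m)), (u + (1,0)).2 + ((b : ℤ) : ZMod (2*m))) = (u.1 + ((a:ℤ) : ZMod (2*m)), u.2 + ((b:ℤ) : ZMod (2*m))) := by
        refine Prod.ext ?_ ?_ <;> simp <;> push_cast <;> ring
      exact ⟨SimpleGraph.Walk.cons adj (p.copy rfl hend), by simp [hp]⟩
end

section
variable {m : ℕ}
open SimpleGraph

lemma TorusCut.dd_succ (hm : 3 ≤ m) (t : ZMod (2*m)) :
    TorusCut.dd (t+1) ≤ TorusCut.dd t + 1 ∧ TorusCut.dd t ≤ TorusCut.dd (t+1) + 1 := by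
  haveI : NeZero (2*m) := ⟨by omega⟩
  haveI : Fact (1 < 2*m) := ⟨by omega⟩
  have h1 : (t+1).val = (t.val + 1) % (2*m) := by rw [ZMod.val_add, ZMod.val_one]
  have h2 : t.val < 2*m := ZMod.val_lt _
  unfold TorusCut.dd
  rcases Nat.lt_or_ge (t.val + 1) (2*m) with h | h
  · rw [Nat.mod_eq_of_lt h] at h1; omega
  · have he : t.val + 1 = 2*m := by omega
    rw [he, Nat.mod_self] at h1; omega

lemma TorusCut.lip (hm : 3 ≤ m) (c : ZMod (2*m) × ZMod (2*m))
    {u w : ZMod (2*m) × ZMod (2*m)} (h : (torus (2*m)).Adj u w) :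
    TorusCut.dd (w.1 - c.1) + TorusCut.dd (w.2 - c.2) ≤
      TorusCut.dd (u.1 - c.1) + TorusCut.dd (u.2 - c.2) + 1 := by
  rcases TorusCut.adj_cases h with rfl | rfl | rfl | rfl
  · have e1 : (u + ((1:ZMod (2*m)),(0:ZMod (2*m)))).1 - c.1 = (u.1 - c.1) + 1 := by simp; ring
    have e2 : (u + ((1:ZMod (2*m)),(0:ZMod (2*m)))).2 - c.2 = u.2 - c.2 := by simp
    rw [e1, e2]
    have := (TorusCut.dd_succ hm (u.1 - c.1)).1
    omega
  · have e1 : u.1 - c.1 = ((u + ((-1:ZMod (2*m)),(0:ZMod (2*m)))).1 - c.1) + 1 := by simp; ring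
    have e2 : (u + ((-1:ZMod (2*m)),(0:ZMod (2*m)))).2 - c.2 = u.2 - c.2 := by simp
    rw [e2]
    have := (TorusCut.dd_succ hm ((u + ((-1:ZMod (2*m)),(0:ZMod (2*m)))).1 - c.1)).2
    rw [← e1] at this
    omega
  · have e1 : (u + ((0:ZMod (2*m)),(1:ZMod (2*m)))).2 - c.2 = (u.2 - c.2) + 1 := by simp; ring
    have e2 : (u + ((0:ZMod (2*m)),(1:ZMod (2*m)))).1 - c.1 = u.1 - c.1 := by simp
    rw [e1, e2]
    have := (TorusCut.dd_succ hm (u.2 - c.2)).1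
    omega
  · have e1 : u.2 - c.2 = ((u + ((0:ZMod (2*m)),(-1:ZMod (2*m)))).2 - c.2) + 1 := by simp; ring
    have e2 : (u + ((0:ZMod (2*m)),(-1:ZMod (2*m)))).1 - c.1 = u.1 - c.1 := by simp
    rw [e2]
    have := (TorusCut.dd_succ hm ((u + ((0:ZMod (2*m)),(-1:ZMod (2*m)))).2 - c.2)).2
    rw [← e1] at this
    omega

lemma TorusCut.walk_lb (hm : 3 ≤ m) (c : ZMod (2*m) × ZMod (2*m)) :
    ∀ {u v : ZMod (2*m) × ZMod (2*m)} (p : (torus (2*m)).Walk u v),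
    TorusCut.dd (v.1 - c.1) + TorusCut.dd (v.2 - c.2) ≤
      (TorusCut.dd (u.1 - c.1) + TorusCut.dd (u.2 - c.2)) + p.length := by
  intro u v p
  induction p with
  | nil => simp
  | cons h q ih =>
    have := TorusCut.lip hm c h
    simp only [SimpleGraph.Walk.length_cons]
    omega

lemma TorusCut.reach (hm : 3 ≤ m) (c v : ZMod (2*m) × ZMod (2*m)) :
    (torus (2*m)).Reachable c v := by
  obtain ⟨a, hca, ha, ha'⟩ := TorusCut.rep hm (v.1 - c.1)
  obtain ⟨b, hcb, hb, hb'⟩ := TorusCut.rep hm (v.2 - c.2)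
  obtain ⟨p, hp⟩ := TorusCut.exists_walk hm _ a b rfl c
  have hend : (c.1 + (a : ZMod (2*m)), c.2 + (b : ZMod (2*m))) = v := by
    rw [hca, hcb]
    exact Prod.ext (by simp) (by simp)
  exact ⟨p.copy rfl hend⟩

lemma TorusCut.dist_eq (hm : 3 ≤ m) (c v : ZMod (2*m) × ZMod (2*m)) :
    (torus (2*m)).dist c v = TorusCut.dd (v.1 - c.1) + TorusCut.dd (v.2 - c.2) := by
  refine le_antisymm ?_ ?_
  · obtain ⟨a, hca, ha, ha'⟩ := TorusCut.rep hm (v.1 - c.1)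
    obtain ⟨b, hcb, hb, hb'⟩ := TorusCut.rep hm (v.2 - c.2)
    obtain ⟨p, hp⟩ := TorusCut.exists_walk hm _ a b rfl c
    have hend : (c.1 + (a : ZMod (2*m)), c.2 + (b : ZMod (2*m))) = v := by
      rw [hca, hcb]
      exact Prod.ext (by simp) (by simp)
    have := SimpleGraph.dist_le (p.copy rfl hend)
    rw [SimpleGraph.Walk.length_copy, hp] at this
    omega
  · obtain ⟨p, hp⟩ := (TorusCut.reach hm c v).exists_walk_length_eq_dist
    have := TorusCut.walk_lb hm c p
    rw [hp] at this
    simpa [sub_self, TorusCut.dd_zero hm] using this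
end

section
variable {m : ℕ}
open SimpleGraph

def TorusCut.ph (m : ℕ) (c : ZMod (2*m) × ZMod (2*m)) (a b : ℤ) : ZMod (2*m) × ZMod (2*m) :=
  (c.1 + (a : ZMod (2*m)), c.2 + (b : ZMod (2*m)))

def TorusCut.SS (m : ℕ) (c : ZMod (2*m) × ZMod (2*m)) (va vb : ℤ) : Set (ZMod (2*m) × ZMod (2*m)) :=
  {v | (torus (2*m)).dist c v ≤ m - 1} \ {TorusCut.ph m c va vb}

lemma TorusCut.ph_mem_ball_iff (hm : 3 ≤ m) (c : ZMod (2*m) × ZMod (2*m)) {a b : ℤ}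
    (ha : a.natAbs ≤ m) (hb : b.natAbs ≤ m) :
    (torus (2*m)).dist c (TorusCut.ph m c a b) ≤ m - 1 ↔ a.natAbs + b.natAbs ≤ m - 1 := by
  rw [TorusCut.dist_eq hm]
  show TorusCut.dd (c.1 + (a : ZMod (2*m)) - c.1) + TorusCut.dd (c.2 + (b : ZMod (2*m)) - c.2) ≤ m - 1 ↔ _
  rw [add_sub_cancel_left, add_sub_cancel_left, TorusCut.dd_intCast hm a ha,
    TorusCut.dd_intCast hm b hb]

lemma TorusCut.ph_eq_iff (hm : 3 ≤ m) {c : ZMod (2*m) × ZMod (2*m)} {a b a' b' : ℤ}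
    (h : (a - a').natAbs < 2*m) (h2 : (b - b').natAbs < 2*m) :
    TorusCut.ph m c a b = TorusCut.ph m c a' b' ↔ (a = a' ∧ b = b') := by
  rw [TorusCut.ph, TorusCut.ph, Prod.mk.injEq, add_right_inj, add_right_inj,
    TorusCut.castInj hm h, TorusCut.castInj hm h2]

lemma TorusCut.mem_S (hm : 3 ≤ m) (c : ZMod (2*m) × ZMod (2*m)) {va vb a b : ℤ}
    (hv : va.natAbs + vb.natAbs ≤ m - 1) (hab : a.natAbs + b.natAbs ≤ m - 1)
    (hne : ¬(a = va ∧ b = vb)) : TorusCut.ph m c a b ∈ TorusCut.SS m c va vb := by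
  refine ⟨(TorusCut.ph_mem_ball_iff hm c (by omega) (by omega)).mpr hab, ?_⟩
  intro hmem
  rw [Set.mem_singleton_iff, TorusCut.ph_eq_iff hm (by omega) (by omega)] at hmem
  exact hne hmem

lemma TorusCut.reach_step {V : Type*} {G : SimpleGraph V} {s : Set V} {u w : V}
    (hu : u ∈ s) (hw : w ∈ s) (h : G.Adj u w) :
    (G.induce s).Reachable ⟨u, hu⟩ ⟨w, hw⟩ :=
  SimpleGraph.Adj.reachable (by simpa using h)

lemma TorusCut.reach_adj_ph (hm : 3 ≤ m) (c : ZMod (2*m) × ZMod (2*m)) {s : Set (ZMod (2*m) × ZMod (2*m))}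
    {a b a' b' : ℤ} (h1 : TorusCut.ph m c a b ∈ s) (h2 : TorusCut.ph m c a' b' ∈ s)
    (hstep : (a' = a + 1 ∧ b' = b) ∨ (a' = a - 1 ∧ b' = b) ∨ (a' = a ∧ b' = b + 1) ∨
      (a' = a ∧ b' = b - 1)) :
    ((torus (2*m)).induce s).Reachable ⟨TorusCut.ph m c a b, h1⟩ ⟨TorusCut.ph m c a' b', h2⟩ := by
  refine TorusCut.reach_step h1 h2 ?_
  rcases hstep with ⟨ha', hb'⟩ | ⟨ha', hb'⟩ | ⟨ha', hb'⟩ | ⟨ha', hb'⟩ <;> subst ha' <;> subst hb'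
  · have he : TorusCut.ph m c (a+1) b' = TorusCut.ph m c a b' + ((1 : ZMod (2*m)), (0 : ZMod (2*m))) := by
      refine Prod.ext ?_ ?_ <;> simp [TorusCut.ph] <;> push_cast <;> ring
    rw [he]; exact TorusCut.adj_unit hm _ _ (by tauto)
  · have he : TorusCut.ph m c (a-1) b' = TorusCut.ph m c a b' + ((-1 : ZMod (2*m)), (0 : ZMod (2*m))) := by
      refine Prod.ext ?_ ?_ <;> simp [TorusCut.ph] <;> push_cast <;> ring
    rw [he]; exact TorusCut.adj_unit hm _ _ (by tauto)
  · have he : TorusCut.ph m c a' (b+1) = TorusCut.ph m c a' b + ((0 : ZMod (2*m)), (1 : ZMod (2*m))) := by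
      refine Prod.ext ?_ ?_ <;> simp [TorusCut.ph] <;> push_cast <;> ring
    rw [he]; exact TorusCut.adj_unit hm _ _ (by tauto)
  · have he : TorusCut.ph m c a' (b-1) = TorusCut.ph m c a' b + ((0 : ZMod (2*m)), (-1 : ZMod (2*m))) := by
      refine Prod.ext ?_ ?_ <;> simp [TorusCut.ph] <;> push_cast <;> ring
    rw [he]; exact TorusCut.adj_unit hm _ _ (by tauto)
end

section
variable {m : ℕ}
open SimpleGraph TorusCut

lemma TorusCut.key_center (hm : 3 ≤ m) (c : ZMod (2*m) × ZMod (2*m)) :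
    ∀ (n : ℕ) (a b : ℤ), a.natAbs + b.natAbs = n → a.natAbs + b.natAbs ≤ m - 1 →
    ¬(a = 0 ∧ b = 0) →
    ∀ (h1 : ph m c a b ∈ SS m c 0 0) (h2 : ph m c 1 0 ∈ SS m c 0 0),
    ((torus (2*m)).induce (SS m c 0 0)).Reachable ⟨ph m c a b, h1⟩ ⟨ph m c 1 0, h2⟩ := by
  intro n
  induction n using Nat.strong_induction_on with
  | _ n ih =>
    intro a b hn hball hne h1 h2
    have hv0 : (0:ℤ).natAbs + (0:ℤ).natAbs ≤ m - 1 := by omega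
    by_cases hb0 : b = 0
    · subst hb0
      rcases lt_trichotomy a 0 with ha | ha | ha
      · by_cases ha1 : a = -1
        · subst ha1
          have m1 : ph m c (-1) 1 ∈ SS m c 0 0 := mem_S hm c hv0 (by omega) (by omega)
          have m2 : ph m c 0 1 ∈ SS m c 0 0 := mem_S hm c hv0 (by omega) (by omega)
          have m3 : ph m c 1 1 ∈ SS m c 0 0 := mem_S hm c hv0 (by omega) (by omega)
          refine (((reach_adj_ph hm c h1 m1 (Or.inr (Or.inr (Or.inl ⟨rfl, by omega⟩)))).trans
            (reach_adj_ph hm c m1 m2 (Or.inl ⟨by omega, rfl⟩))).trans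
            (reach_adj_ph hm c m2 m3 (Or.inl ⟨by omega, rfl⟩))).trans
            (reach_adj_ph hm c m3 h2 (Or.inr (Or.inr (Or.inr ⟨rfl, by omega⟩))))
        · have m1 : ph m c (a+1) 0 ∈ SS m c 0 0 := mem_S hm c hv0 (by omega) (by omega)
          exact (reach_adj_ph hm c h1 m1 (Or.inl ⟨rfl, rfl⟩)).trans
            (ih (n-1) (by omega) (a+1) 0 (by omega) (by omega) (by omega) m1 h2)
      · exact absurd ⟨ha, rfl⟩ hne
      · by_cases ha1 : a = 1
        · subst ha1; exact Reachable.refl _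
        · have m1 : ph m c (a-1) 0 ∈ SS m c 0 0 := mem_S hm c hv0 (by omega) (by omega)
          exact (reach_adj_ph hm c h1 m1 (Or.inr (Or.inl ⟨rfl, rfl⟩))).trans
            (ih (n-1) (by omega) (a-1) 0 (by omega) (by omega) (by omega) m1 h2)
    · by_cases ha0 : a = 0
      · subst ha0
        rcases lt_trichotomy b 0 with hb | hb | hb
        · by_cases hb1 : b = -1
          · subst hb1
            have m1 : ph m c 1 (-1) ∈ SS m c 0 0 := mem_S hm c hv0 (by omega) (by omega)
            exact (reach_adj_ph hm c h1 m1 (Or.inl ⟨by omega, rfl⟩)).trans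
              (reach_adj_ph hm c m1 h2 (Or.inr (Or.inr (Or.inl ⟨rfl, by omega⟩))))
          · have m1 : ph m c 0 (b+1) ∈ SS m c 0 0 := mem_S hm c hv0 (by omega) (by omega)
            exact (reach_adj_ph hm c h1 m1 (Or.inr (Or.inr (Or.inl ⟨rfl, rfl⟩)))).trans
              (ih (n-1) (by omega) 0 (b+1) (by omega) (by omega) (by omega) m1 h2)
        · exact absurd hb hb0
        · by_cases hb1 : b = 1
          · subst hb1
            have m1 : ph m c 1 1 ∈ SS m c 0 0 := mem_S hm c hv0 (by omega) (by omega)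
            exact (reach_adj_ph hm c h1 m1 (Or.inl ⟨by omega, rfl⟩)).trans
              (reach_adj_ph hm c m1 h2 (Or.inr (Or.inr (Or.inr ⟨rfl, by omega⟩))))
          · have m1 : ph m c 0 (b-1) ∈ SS m c 0 0 := mem_S hm c hv0 (by omega) (by omega)
            exact (reach_adj_ph hm c h1 m1 (Or.inr (Or.inr (Or.inr ⟨rfl, rfl⟩)))).trans
              (ih (n-1) (by omega) 0 (b-1) (by omega) (by omega) (by omega) m1 h2)
      · rcases lt_trichotomy a 0 with ha | ha | ha
        · have m1 : ph m c (a+1) b ∈ SS m c 0 0 := mem_S hm c hv0 (by omega) (by omega)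
          exact (reach_adj_ph hm c h1 m1 (Or.inl ⟨rfl, rfl⟩)).trans
            (ih (n-1) (by omega) (a+1) b (by omega) (by omega) (by omega) m1 h2)
        · exact absurd ha ha0
        · have m1 : ph m c (a-1) b ∈ SS m c 0 0 := mem_S hm c hv0 (by omega) (by omega)
          exact (reach_adj_ph hm c h1 m1 (Or.inr (Or.inl ⟨rfl, rfl⟩))).trans
            (ih (n-1) (by omega) (a-1) b (by omega) (by omega) (by omega) m1 h2)
end

section
variable {m : ℕ}
open SimpleGraph TorusCut

lemma TorusCut.key_off (hm : 3 ≤ m) (c : ZMod (2*m) × ZMod (2*m)) {va vb : ℤ}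
    (hv : va.natAbs + vb.natAbs ≤ m - 1) (hvc : ¬(va = 0 ∧ vb = 0))
    (hx : ¬(vb = 0 ∧ va.natAbs = m - 2)) (hy : ¬(va = 0 ∧ vb.natAbs = m - 2)) :
    ∀ (n : ℕ) (a b : ℤ), a.natAbs + b.natAbs = n → a.natAbs + b.natAbs ≤ m - 1 →
    ¬(a = va ∧ b = vb) →
    ∀ (h1 : ph m c a b ∈ SS m c va vb) (h2 : ph m c 0 0 ∈ SS m c va vb),
    ((torus (2*m)).induce (SS m c va vb)).Reachable ⟨ph m c a b, h1⟩ ⟨ph m c 0 0, h2⟩ := by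
  intro n
  induction n using Nat.strong_induction_on with
  | _ n ih =>
    intro a b hn hball hne h1 h2
    by_cases hb0 : b = 0
    · subst hb0
      rcases lt_trichotomy a 0 with ha | ha | ha
      · by_cases hbl : a + 1 = va ∧ (0:ℤ) = vb
        · obtain ⟨hva', hvb'⟩ := hbl
          subst hva'; subst hvb'
          have ha2 : a ≤ -2 := by omega
          have ham : -a ≤ (m:ℤ) - 2 := by omega
          have m1 : ph m c a 1 ∈ SS m c (a+1) 0 := mem_S hm c hv (by omega) (by omega)
          have m2 : ph m c (a+1) 1 ∈ SS m c (a+1) 0 := mem_S hm c hv (by omega) (by omega)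
          have m3 : ph m c (a+2) 1 ∈ SS m c (a+1) 0 := mem_S hm c hv (by omega) (by omega)
          have m4 : ph m c (a+2) 0 ∈ SS m c (a+1) 0 := mem_S hm c hv (by omega) (by omega)
          refine ((((reach_adj_ph hm c h1 m1 (Or.inr (Or.inr (Or.inl ⟨rfl, by omega⟩)))).trans
            (reach_adj_ph hm c m1 m2 (Or.inl ⟨rfl, rfl⟩))).trans
            (reach_adj_ph hm c m2 m3 (Or.inl ⟨by omega, rfl⟩))).trans
            (reach_adj_ph hm c m3 m4 (Or.inr (Or.inr (Or.inr ⟨rfl, by omega⟩))))).trans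
            (ih (n-2) (by omega) (a+2) 0 (by omega) (by omega) (by omega) m4 h2)
        · have m1 : ph m c (a+1) 0 ∈ SS m c va vb := mem_S hm c hv (by omega) hbl
          exact (reach_adj_ph hm c h1 m1 (Or.inl ⟨rfl, rfl⟩)).trans
            (ih (n-1) (by omega) (a+1) 0 (by omega) (by omega) hbl m1 h2)
      · subst ha; exact Reachable.refl _
      · by_cases hbl : a - 1 = va ∧ (0:ℤ) = vb
        · obtain ⟨hva', hvb'⟩ := hbl
          subst hva'; subst hvb'
          have ha2 : 2 ≤ a := by omega
          have ham : a ≤ (m:ℤ) - 2 := by omega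
          have m1 : ph m c a 1 ∈ SS m c (a-1) 0 := mem_S hm c hv (by omega) (by omega)
          have m2 : ph m c (a-1) 1 ∈ SS m c (a-1) 0 := mem_S hm c hv (by omega) (by omega)
          have m3 : ph m c (a-2) 1 ∈ SS m c (a-1) 0 := mem_S hm c hv (by omega) (by omega)
          have m4 : ph m c (a-2) 0 ∈ SS m c (a-1) 0 := mem_S hm c hv (by omega) (by omega)
          refine ((((reach_adj_ph hm c h1 m1 (Or.inr (Or.inr (Or.inl ⟨rfl, by omega⟩)))).trans
            (reach_adj_ph hm c m1 m2 (Or.inr (Or.inl ⟨rfl, rfl⟩)))).trans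
            (reach_adj_ph hm c m2 m3 (Or.inr (Or.inl ⟨by omega, rfl⟩)))).trans
            (reach_adj_ph hm c m3 m4 (Or.inr (Or.inr (Or.inr ⟨rfl, by omega⟩))))).trans
            (ih (n-2) (by omega) (a-2) 0 (by omega) (by omega) (by omega) m4 h2)
        · have m1 : ph m c (a-1) 0 ∈ SS m c va vb := mem_S hm c hv (by omega) hbl
          exact (reach_adj_ph hm c h1 m1 (Or.inr (Or.inl ⟨rfl, rfl⟩))).trans
            (ih (n-1) (by omega) (a-1) 0 (by omega) (by omega) hbl m1 h2)
    · by_cases ha0 : a = 0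
      · subst ha0
        rcases lt_trichotomy b 0 with hb | hb | hb
        · by_cases hbl : (0:ℤ) = va ∧ b + 1 = vb
          · obtain ⟨hva', hvb'⟩ := hbl
            subst hva'; subst hvb'
            have hb2 : b ≤ -2 := by omega
            have hbm : -b ≤ (m:ℤ) - 2 := by omega
            have m1 : ph m c 1 b ∈ SS m c 0 (b+1) := mem_S hm c hv (by omega) (by omega)
            have m2 : ph m c 1 (b+1) ∈ SS m c 0 (b+1) := mem_S hm c hv (by omega) (by omega)
            have m3 : ph m c 1 (b+2) ∈ SS m c 0 (b+1) := mem_S hm c hv (by omega) (by omega)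
            have m4 : ph m c 0 (b+2) ∈ SS m c 0 (b+1) := mem_S hm c hv (by omega) (by omega)
            refine ((((reach_adj_ph hm c h1 m1 (Or.inl ⟨by omega, rfl⟩)).trans
              (reach_adj_ph hm c m1 m2 (Or.inr (Or.inr (Or.inl ⟨rfl, rfl⟩))))).trans
              (reach_adj_ph hm c m2 m3 (Or.inr (Or.inr (Or.inl ⟨rfl, by omega⟩))))).trans
              (reach_adj_ph hm c m3 m4 (Or.inr (Or.inl ⟨by omega, rfl⟩)))).trans
              (ih (n-2) (by omega) 0 (b+2) (by omega) (by omega) (by omega) m4 h2)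
          · have m1 : ph m c 0 (b+1) ∈ SS m c va vb := mem_S hm c hv (by omega) hbl
            exact (reach_adj_ph hm c h1 m1 (Or.inr (Or.inr (Or.inl ⟨rfl, rfl⟩)))).trans
              (ih (n-1) (by omega) 0 (b+1) (by omega) (by omega) hbl m1 h2)
        · exact absurd hb hb0
        · by_cases hbl : (0:ℤ) = va ∧ b - 1 = vb
          · obtain ⟨hva', hvb'⟩ := hbl
            subst hva'; subst hvb'
            have hb2 : 2 ≤ b := by omega
            have hbm : b ≤ (m:ℤ) - 2 := by omega
            have m1 : ph m c 1 b ∈ SS m c 0 (b-1) := mem_S hm c hv (by omega) (by omega)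
            have m2 : ph m c 1 (b-1) ∈ SS m c 0 (b-1) := mem_S hm c hv (by omega) (by omega)
            have m3 : ph m c 1 (b-2) ∈ SS m c 0 (b-1) := mem_S hm c hv (by omega) (by omega)
            have m4 : ph m c 0 (b-2) ∈ SS m c 0 (b-1) := mem_S hm c hv (by omega) (by omega)
            refine ((((reach_adj_ph hm c h1 m1 (Or.inl ⟨by omega, rfl⟩)).trans
              (reach_adj_ph hm c m1 m2 (Or.inr (Or.inr (Or.inr ⟨rfl, rfl⟩))))).trans
              (reach_adj_ph hm c m2 m3 (Or.inr (Or.inr (Or.inr ⟨rfl, by omega⟩))))).trans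
              (reach_adj_ph hm c m3 m4 (Or.inr (Or.inl ⟨by omega, rfl⟩)))).trans
              (ih (n-2) (by omega) 0 (b-2) (by omega) (by omega) (by omega) m4 h2)
          · have m1 : ph m c 0 (b-1) ∈ SS m c va vb := mem_S hm c hv (by omega) hbl
            exact (reach_adj_ph hm c h1 m1 (Or.inr (Or.inr (Or.inr ⟨rfl, rfl⟩)))).trans
              (ih (n-1) (by omega) 0 (b-1) (by omega) (by omega) hbl m1 h2)
      · rcases lt_trichotomy a 0 with ha | ha | ha
        · by_cases hbl : a + 1 = va ∧ b = vb
          · obtain ⟨hva', hvb'⟩ := hbl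
            rcases lt_trichotomy b 0 with hb | hb | hb
            · have m1 : ph m c a (b+1) ∈ SS m c va vb := mem_S hm c hv (by omega) (by omega)
              exact (reach_adj_ph hm c h1 m1 (Or.inr (Or.inr (Or.inl ⟨rfl, rfl⟩)))).trans
                (ih (n-1) (by omega) a (b+1) (by omega) (by omega) (by omega) m1 h2)
            · exact absurd hb hb0
            · have m1 : ph m c a (b-1) ∈ SS m c va vb := mem_S hm c hv (by omega) (by omega)
              exact (reach_adj_ph hm c h1 m1 (Or.inr (Or.inr (Or.inr ⟨rfl, rfl⟩)))).trans
                (ih (n-1) (by omega) a (b-1) (by omega) (by omega) (by omega) m1 h2)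
          · have m1 : ph m c (a+1) b ∈ SS m c va vb := mem_S hm c hv (by omega) hbl
            exact (reach_adj_ph hm c h1 m1 (Or.inl ⟨rfl, rfl⟩)).trans
              (ih (n-1) (by omega) (a+1) b (by omega) (by omega) hbl m1 h2)
        · exact absurd ha ha0
        · by_cases hbl : a - 1 = va ∧ b = vb
          · obtain ⟨hva', hvb'⟩ := hbl
            rcases lt_trichotomy b 0 with hb | hb | hb
            · have m1 : ph m c a (b+1) ∈ SS m c va vb := mem_S hm c hv (by omega) (by omega)
              exact (reach_adj_ph hm c h1 m1 (Or.inr (Or.inr (Or.inl ⟨rfl, rfl⟩)))).trans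
                (ih (n-1) (by omega) a (b+1) (by omega) (by omega) (by omega) m1 h2)
            · exact absurd hb hb0
            · have m1 : ph m c a (b-1) ∈ SS m c va vb := mem_S hm c hv (by omega) (by omega)
              exact (reach_adj_ph hm c h1 m1 (Or.inr (Or.inr (Or.inr ⟨rfl, rfl⟩)))).trans
                (ih (n-1) (by omega) a (b-1) (by omega) (by omega) (by omega) m1 h2)
          · have m1 : ph m c (a-1) b ∈ SS m c va vb := mem_S hm c hv (by omega) hbl
            exact (reach_adj_ph hm c h1 m1 (Or.inr (Or.inl ⟨rfl, rfl⟩))).trans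
              (ih (n-1) (by omega) (a-1) b (by omega) (by omega) hbl m1 h2)
end

section
variable {m : ℕ}
open SimpleGraph TorusCut

lemma TorusCut.conn (hm : 3 ≤ m) (c : ZMod (2*m) × ZMod (2*m)) {va vb : ℤ}
    (hv : va.natAbs + vb.natAbs ≤ m - 1)
    (hx : ¬(vb = 0 ∧ va.natAbs = m - 2)) (hy : ¬(va = 0 ∧ vb.natAbs = m - 2)) :
    ((torus (2*m)).induce (SS m c va vb)).Connected := by
  rw [connected_iff_exists_forall_reachable]
  by_cases hvc : va = 0 ∧ vb = 0
  · obtain ⟨rfl, rfl⟩ := hvc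
    have hbase : ph m c 1 0 ∈ SS m c 0 0 := mem_S hm c (by omega) (by omega) (by omega)
    refine ⟨⟨ph m c 1 0, hbase⟩, ?_⟩
    rintro ⟨w, hw⟩
    obtain ⟨a, hca, ha, ha'⟩ := rep hm (w.1 - c.1)
    obtain ⟨b, hcb, hb, hb'⟩ := rep hm (w.2 - c.2)
    have hw' : w = ph m c a b := by
      have e1 : w.1 = c.1 + (a : ZMod (2*m)) := by rw [hca]; ring
      have e2 : w.2 = c.2 + (b : ZMod (2*m)) := by rw [hcb]; ring
      exact Prod.ext e1 e2
    subst hw'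
    have hball : a.natAbs + b.natAbs ≤ m - 1 := (ph_mem_ball_iff hm c ha hb).mp hw.1
    have hne : ¬(a = 0 ∧ b = 0) := by
      rintro ⟨rfl, rfl⟩
      exact hw.2 rfl
    exact (key_center hm c _ a b rfl hball hne hw hbase).symm
  · have hvc' : ¬((0:ℤ) = va ∧ (0:ℤ) = vb) := by
      intro h; exact hvc ⟨h.1.symm, h.2.symm⟩
    have hbase : ph m c 0 0 ∈ SS m c va vb := mem_S hm c hv (by omega) hvc'
    refine ⟨⟨ph m c 0 0, hbase⟩, ?_⟩
    rintro ⟨w, hw⟩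
    obtain ⟨a, hca, ha, ha'⟩ := rep hm (w.1 - c.1)
    obtain ⟨b, hcb, hb, hb'⟩ := rep hm (w.2 - c.2)
    have hw' : w = ph m c a b := by
      have e1 : w.1 = c.1 + (a : ZMod (2*m)) := by rw [hca]; ring
      have e2 : w.2 = c.2 + (b : ZMod (2*m)) := by rw [hcb]; ring
      exact Prod.ext e1 e2
    subst hw'
    have hball : a.natAbs + b.natAbs ≤ m - 1 := (ph_mem_ball_iff hm c ha hb).mp hw.1
    have hne : ¬(a = va ∧ b = vb) := by
      intro h
      exact hw.2 (show ph m c a b = ph m c va vb by rw [h.1, h.2])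
    exact (key_off hm c hv hvc hx hy _ a b rfl hball hne hw hbase).symm

lemma TorusCut.reach_cases {V : Type*} {G : SimpleGraph V} {x y : V} (h : G.Reachable x y) :
    x = y ∨ ∃ z, G.Adj x z := by
  obtain ⟨p⟩ := h
  cases p with
  | nil => exact Or.inl rfl
  | cons h q => exact Or.inr ⟨_, h⟩

lemma TorusCut.disc_x (hm : 3 ≤ m) (c : ZMod (2*m) × ZMod (2*m)) (ε : ℤ) (hε : ε = 1 ∨ ε = -1) :
    ¬ ((torus (2*m)).induce (SS m c (ε*((m:ℤ)-2)) 0)).Connected := by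
  intro hcon
  have hv : (ε*((m:ℤ)-2)).natAbs + (0:ℤ).natAbs ≤ m - 1 := by rcases hε with rfl | rfl <;> omega
  have ht : ph m c (ε*((m:ℤ)-1)) 0 ∈ SS m c (ε*((m:ℤ)-2)) 0 :=
    mem_S hm c hv (by rcases hε with rfl | rfl <;> omega) (by rcases hε with rfl | rfl <;> omega)
  have hb0 : ph m c 0 0 ∈ SS m c (ε*((m:ℤ)-2)) 0 :=
    mem_S hm c hv (by omega) (by rcases hε with rfl | rfl <;> omega)
  obtain heq | ⟨⟨u, hu⟩, hadj⟩ := reach_cases (hcon.preconnected ⟨_, ht⟩ ⟨_, hb0⟩)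
  · have h' := congrArg Subtype.val heq
    rw [ph_eq_iff hm (by rcases hε with rfl | rfl <;> omega) (by omega)] at h'
    rcases hε with rfl | rfl <;> omega
  · have hadj' : (torus (2*m)).Adj (ph m c (ε*((m:ℤ)-1)) 0) u := by simpa using hadj
    rcases adj_cases hadj' with hu' | hu' | hu' | hu'
    · have he : ph m c (ε*((m:ℤ)-1)) 0 + ((1:ZMod (2*m)), (0:ZMod (2*m)))
          = ph m c (ε*((m:ℤ)-1)+1) 0 := by
        refine Prod.ext ?_ ?_ <;> simp [ph] <;> push_cast <;> ring
      rw [he] at hu'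
      subst hu'
      rcases hε with rfl | rfl
      · have := (ph_mem_ball_iff hm c (by omega) (by omega)).mp hu.1
        omega
      · refine hu.2 ?_
        show ph m c (-1*((m:ℤ)-1)+1) 0 = ph m c (-1*((m:ℤ)-2)) 0
        have e : (-1*((m:ℤ)-1)+1) = -1*((m:ℤ)-2) := by ring
        rw [e]
    · have he : ph m c (ε*((m:ℤ)-1)) 0 + ((-1:ZMod (2*m)), (0:ZMod (2*m)))
          = ph m c (ε*((m:ℤ)-1)-1) 0 := by
        refine Prod.ext ?_ ?_ <;> simp [ph] <;> push_cast <;> ring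
      rw [he] at hu'
      subst hu'
      rcases hε with rfl | rfl
      · refine hu.2 ?_
        show ph m c (1*((m:ℤ)-1)-1) 0 = ph m c (1*((m:ℤ)-2)) 0
        have e : (1*((m:ℤ)-1)-1) = 1*((m:ℤ)-2) := by ring
        rw [e]
      · have := (ph_mem_ball_iff hm c (by omega) (by omega)).mp hu.1
        omega
    · have he : ph m c (ε*((m:ℤ)-1)) 0 + ((0:ZMod (2*m)), (1:ZMod (2*m)))
          = ph m c (ε*((m:ℤ)-1)) 1 := by
        refine Prod.ext ?_ ?_ <;> simp [ph] <;> push_cast <;> ring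
      rw [he] at hu'
      subst hu'
      have := (ph_mem_ball_iff hm c (by rcases hε with rfl | rfl <;> omega) (by omega)).mp hu.1
      rcases hε with rfl | rfl <;> omega
    · have he : ph m c (ε*((m:ℤ)-1)) 0 + ((0:ZMod (2*m)), (-1:ZMod (2*m)))
          = ph m c (ε*((m:ℤ)-1)) (-1) := by
        refine Prod.ext ?_ ?_ <;> simp [ph] <;> push_cast <;> ring
      rw [he] at hu'
      subst hu'
      have := (ph_mem_ball_iff hm c (by rcases hε with rfl | rfl <;> omega) (by omega)).mp hu.1
      rcases hε with rfl | rfl <;> omega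

lemma TorusCut.disc_y (hm : 3 ≤ m) (c : ZMod (2*m) × ZMod (2*m)) (ε : ℤ) (hε : ε = 1 ∨ ε = -1) :
    ¬ ((torus (2*m)).induce (SS m c 0 (ε*((m:ℤ)-2)))).Connected := by
  intro hcon
  have hv : (0:ℤ).natAbs + (ε*((m:ℤ)-2)).natAbs ≤ m - 1 := by rcases hε with rfl | rfl <;> omega
  have ht : ph m c 0 (ε*((m:ℤ)-1)) ∈ SS m c 0 (ε*((m:ℤ)-2)) :=
    mem_S hm c hv (by rcases hε with rfl | rfl <;> omega) (by rcases hε with rfl | rfl <;> omega)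
  have hb0 : ph m c 0 0 ∈ SS m c 0 (ε*((m:ℤ)-2)) :=
    mem_S hm c hv (by omega) (by rcases hε with rfl | rfl <;> omega)
  obtain heq | ⟨⟨u, hu⟩, hadj⟩ := reach_cases (hcon.preconnected ⟨_, ht⟩ ⟨_, hb0⟩)
  · have h' := congrArg Subtype.val heq
    rw [ph_eq_iff hm (by omega) (by rcases hε with rfl | rfl <;> omega)] at h'
    rcases hε with rfl | rfl <;> omega
  · have hadj' : (torus (2*m)).Adj (ph m c 0 (ε*((m:ℤ)-1))) u := by simpa using hadj
    rcases adj_cases hadj' with hu' | hu' | hu' | hu'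
    · have he : ph m c 0 (ε*((m:ℤ)-1)) + ((1:ZMod (2*m)), (0:ZMod (2*m)))
          = ph m c 1 (ε*((m:ℤ)-1)) := by
        refine Prod.ext ?_ ?_ <;> simp [ph] <;> push_cast <;> ring
      rw [he] at hu'
      subst hu'
      have := (ph_mem_ball_iff hm c (by omega) (by rcases hε with rfl | rfl <;> omega)).mp hu.1
      rcases hε with rfl | rfl <;> omega
    · have he : ph m c 0 (ε*((m:ℤ)-1)) + ((-1:ZMod (2*m)), (0:ZMod (2*m)))
          = ph m c (-1) (ε*((m:ℤ)-1)) := by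
        refine Prod.ext ?_ ?_ <;> simp [ph] <;> push_cast <;> ring
      rw [he] at hu'
      subst hu'
      have := (ph_mem_ball_iff hm c (by omega) (by rcases hε with rfl | rfl <;> omega)).mp hu.1
      rcases hε with rfl | rfl <;> omega
    · have he : ph m c 0 (ε*((m:ℤ)-1)) + ((0:ZMod (2*m)), (1:ZMod (2*m)))
          = ph m c 0 (ε*((m:ℤ)-1)+1) := by
        refine Prod.ext ?_ ?_ <;> simp [ph] <;> push_cast <;> ring
      rw [he] at hu'
      subst hu'
      rcases hε with rfl | rfl
      · have := (ph_mem_ball_iff hm c (by omega) (by omega)).mp hu.1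
        omega
      · refine hu.2 ?_
        have e : (-1*((m:ℤ)-1)+1) = -1*((m:ℤ)-2) := by ring
        show ph m c 0 (-1*((m:ℤ)-1)+1) = ph m c 0 (-1*((m:ℤ)-2))
        rw [e]
    · have he : ph m c 0 (ε*((m:ℤ)-1)) + ((0:ZMod (2*m)), (-1:ZMod (2*m)))
          = ph m c 0 (ε*((m:ℤ)-1)-1) := by
        refine Prod.ext ?_ ?_ <;> simp [ph] <;> push_cast <;> ring
      rw [he] at hu'
      subst hu'
      rcases hε with rfl | rfl
      · refine hu.2 ?_
        have e : (1*((m:ℤ)-1)-1) = 1*((m:ℤ)-2) := by ring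
        show ph m c 0 (1*((m:ℤ)-1)-1) = ph m c 0 (1*((m:ℤ)-2))
        rw [e]
      · have := (ph_mem_ball_iff hm c (by omega) (by omega)).mp hu.1
        omega
end

theorem ball_cut_vertices (m : ℕ) (hm : 3 ≤ m) (c : ZMod (2 * m) × ZMod (2 * m))
    (B : Set (ZMod (2 * m) × ZMod (2 * m)))
    (hB : B = {v | (torus (2 * m)).dist c v ≤ m - 1}) :
    {v | v ∈ B ∧ ¬ ((torus (2 * m)).induce (B \ {v})).Connected} =
      {c + (((m : ZMod (2 * m)) - 2, 0)), c + (-((m : ZMod (2 * m)) - 2), 0),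
       c + ((0, (m : ZMod (2 * m)) - 2)), c + ((0, -((m : ZMod (2 * m)) - 2)))} := by
  subst hB
  have b1 : c + (((m : ZMod (2*m)) - 2), (0:ZMod (2*m))) = TorusCut.ph m c ((m:ℤ)-2) 0 := by
    refine Prod.ext ?_ ?_ <;> simp [TorusCut.ph] <;> push_cast <;> ring
  have b2 : c + (-((m : ZMod (2*m)) - 2), (0:ZMod (2*m))) = TorusCut.ph m c (-((m:ℤ)-2)) 0 := by
    refine Prod.ext ?_ ?_ <;> simp [TorusCut.ph] <;> push_cast <;> ring
  have b3 : c + ((0:ZMod (2*m)), (m : ZMod (2*m)) - 2) = TorusCut.ph m c 0 ((m:ℤ)-2) := by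
    refine Prod.ext ?_ ?_ <;> simp [TorusCut.ph] <;> push_cast <;> ring
  have b4 : c + ((0:ZMod (2*m)), -((m : ZMod (2*m)) - 2)) = TorusCut.ph m c 0 (-((m:ℤ)-2)) := by
    refine Prod.ext ?_ ?_ <;> simp [TorusCut.ph] <;> push_cast <;> ring
  ext v
  simp only [Set.mem_setOf_eq, Set.mem_insert_iff, Set.mem_singleton_iff]
  constructor
  · rintro ⟨hvB, hnc⟩
    obtain ⟨a, hca, ha, ha'⟩ := TorusCut.rep hm (v.1 - c.1)
    obtain ⟨b, hcb, hb, hb'⟩ := TorusCut.rep hm (v.2 - c.2)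
    have hv' : v = TorusCut.ph m c a b := by
      have e1 : v.1 = c.1 + (a : ZMod (2*m)) := by rw [hca]; ring
      have e2 : v.2 = c.2 + (b : ZMod (2*m)) := by rw [hcb]; ring
      exact Prod.ext e1 e2
    have hball : a.natAbs + b.natAbs ≤ m - 1 := by
      have h0 : (torus (2*m)).dist c (TorusCut.ph m c a b) ≤ m - 1 := by rw [← hv']; exact hvB
      exact (TorusCut.ph_mem_ball_iff hm c ha hb).mp h0
    by_contra hnot
    push_neg at hnot
    obtain ⟨h1, h2, h3, h4⟩ := hnot
    have hx : ¬(b = 0 ∧ a.natAbs = m - 2) := by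
      rintro ⟨rfl, hA⟩
      have hA' : a = (m:ℤ) - 2 ∨ a = -((m:ℤ)-2) := by omega
      rcases hA' with rfl | rfl
      · exact h1 (hv'.trans b1.symm)
      · exact h2 (hv'.trans b2.symm)
    have hy : ¬(a = 0 ∧ b.natAbs = m - 2) := by
      rintro ⟨rfl, hA⟩
      have hA' : b = (m:ℤ) - 2 ∨ b = -((m:ℤ)-2) := by omega
      rcases hA' with rfl | rfl
      · exact h3 (hv'.trans b3.symm)
      · exact h4 (hv'.trans b4.symm)
    apply hnc
    rw [hv']
    exact TorusCut.conn hm c hball hx hy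
  · intro h
    rcases h with rfl | rfl | rfl | rfl
    · refine ⟨?_, ?_⟩
      · show (torus (2*m)).dist c _ ≤ m - 1
        rw [b1]
        exact (TorusCut.ph_mem_ball_iff hm c (by omega) (by omega)).mpr (by omega)
      · rw [b1]
        have e : ((m:ℤ)-2) = 1*((m:ℤ)-2) := by ring
        rw [e]
        exact TorusCut.disc_x hm c 1 (Or.inl rfl)
    · refine ⟨?_, ?_⟩
      · show (torus (2*m)).dist c _ ≤ m - 1
        rw [b2]
        exact (TorusCut.ph_mem_ball_iff hm c (by omega) (by omega)).mpr (by omega)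
      · rw [b2]
        have e : (-((m:ℤ)-2)) = -1*((m:ℤ)-2) := by ring
        rw [e]
        exact TorusCut.disc_x hm c (-1) (Or.inr rfl)
    · refine ⟨?_, ?_⟩
      · show (torus (2*m)).dist c _ ≤ m - 1
        rw [b3]
        exact (TorusCut.ph_mem_ball_iff hm c (by omega) (by omega)).mpr (by omega)
      · rw [b3]
        have e : ((m:ℤ)-2) = 1*((m:ℤ)-2) := by ring
        rw [e]
        exact TorusCut.disc_y hm c 1 (Or.inl rfl)
    · refine ⟨?_, ?_⟩
      · show (torus (2*m)).dist c _ ≤ m - 1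
        rw [b4]
        exact (TorusCut.ph_mem_ball_iff hm c (by omega) (by omega)).mpr (by omega)
      · rw [b4]
        have e : (-((m:ℤ)-2)) = -1*((m:ℤ)-2) := by ring
        rw [e]
        exact TorusCut.disc_y hm c (-1) (Or.inr rfl)
end

section
/- Let S be a finite subset of the n×n toroidal grid T_n such that two consecutive rows and two consecutive columns are disjoint from S. Then |N(S)| ≥ b(|S|), where b(s) is the minimum size of the neighborhood of a set of s vertices in the infinite grid ℤ². -/
/-- The infinite grid on `ℤ²`: vertices adjacent iff their `ℓ₁`-distance is `1`. -/
def intGrid : SimpleGraph (ℤ × ℤ) :=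
  SimpleGraph.fromRel (fun v w => (v.1 - w.1).natAbs + (v.2 - w.2).natAbs = 1)

/-- `bInf s` is the minimum size of the open neighborhood of a size-`s` subset of `ℤ²`. -/
noncomputable def bInf (s : ℕ) : ℕ :=
  sInf {k | ∃ S : Set (ℤ × ℤ), S.Finite ∧ S.ncard = s ∧ (nbhd intGrid S).ncard = k}

lemma aux_bounds {n : ℕ} [NeZero n] (hn : 3 ≤ n) (d x : ZMod n)
    (h1 : x ≠ d) (h2 : x ≠ d + 1) : 1 ≤ (x - (d+1)).val ∧ (x - (d+1)).val + 2 ≤ n := by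
  set a := x - (d + 1) with ha
  have hlt : a.val < n := ZMod.val_lt a
  have hne0 : a ≠ 0 := by
    intro h; apply h2; have := sub_eq_zero.mp h; exact this
  have h1' : a.val ≠ 0 := fun h => hne0 ((ZMod.val_eq_zero a).mp h)
  have h2' : a.val ≠ n - 1 := by
    intro h
    apply h1
    have hcast : ((a.val : ℕ) : ZMod n) = a := ZMod.natCast_zmod_val a
    have : a + 1 = 0 := by
      rw [← hcast, h]
      have : ((n - 1 : ℕ) : ZMod n) + 1 = ((n - 1 + 1 : ℕ) : ZMod n) := by push_cast; ring
      rw [this]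
      have : n - 1 + 1 = n := by omega
      rw [this, ZMod.natCast_self]
    have : x - d = 0 := by rw [ha] at this; linear_combination this
    exact sub_eq_zero.mp this
  omega

theorem nbhd_lb_of_consecutive_empty (n : ℕ) (hn : 3 ≤ n) (S : Set (ZMod n × ZMod n))
    (r c : ZMod n)
    (hr : ∀ p ∈ S, p.1 ≠ r ∧ p.1 ≠ r + 1)
    (hc : ∀ p ∈ S, p.2 ≠ c ∧ p.2 ≠ c + 1) :
    bInf S.ncard ≤ (nbhd (torus n) S).ncard := by
  haveI : NeZero n := ⟨by omega⟩
  haveI : Fact (1 < n) := ⟨by omega⟩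
  set f : ZMod n × ZMod n → ℤ × ℤ :=
    fun p => (((p.1 - (r+1)).val : ℤ), ((p.2 - (c+1)).val : ℤ)) with hf
  have hfinj : Function.Injective f := by
    intro p q h
    simp only [hf, Prod.mk.injEq] at h
    have h1 : (p.1 - (r+1)).val = (q.1 - (r+1)).val := by exact_mod_cast h.1
    have h2 : (p.2 - (c+1)).val = (q.2 - (c+1)).val := by exact_mod_cast h.2
    have e1 := ZMod.val_injective n h1
    have e2 := ZMod.val_injective n h2
    exact Prod.ext (by linear_combination e1) (by linear_combination e2)
  have hval1 : (1 : ZMod n).val = 1 := ZMod.val_one n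
  have hvadd : ∀ x : ZMod n, x.val + 1 < n → (x + 1).val = x.val + 1 := by
    intro x h
    rw [ZMod.val_add_of_lt (by rw [hval1]; omega), hval1]
  have hvsub : ∀ x : ZMod n, 1 ≤ x.val → (x - 1).val = x.val - 1 := by
    intro x h
    rw [ZMod.val_sub (by rw [hval1]; omega), hval1]
  -- main inclusion
  have hsub : nbhd intGrid (f '' S) ⊆ f '' (nbhd (torus n) S) := by
    rintro v' ⟨hv'nS, u', ⟨u, huS, rfl⟩, hadj⟩
    obtain ⟨hb1, hb1'⟩ := aux_bounds hn r u.1 (hr u huS).1 (hr u huS).2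
    obtain ⟨hb2, hb2'⟩ := aux_bounds hn c u.2 (hc u huS).1 (hc u huS).2
    have hne : f u ≠ v' := hadj.ne
    have hdist : ((f u).1 - v'.1).natAbs + ((f u).2 - v'.2).natAbs = 1 := by
      rcases hadj with ⟨-, h | h⟩
      · exact h
      · omega
    -- determine the four cases
    have hcases : (v'.1 = (f u).1 + 1 ∧ v'.2 = (f u).2) ∨
        (v'.1 = (f u).1 - 1 ∧ v'.2 = (f u).2) ∨
        (v'.1 = (f u).1 ∧ v'.2 = (f u).2 + 1) ∨
        (v'.1 = (f u).1 ∧ v'.2 = (f u).2 - 1) := by omega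
    have hfu1 : (f u).1 = ((u.1 - (r+1)).val : ℤ) := rfl
    have hfu2 : (f u).2 = ((u.2 - (c+1)).val : ℤ) := rfl
    have hmem : ∀ v : ZMod n × ZMod n, f v = v' → (torus n).Adj u v →
        v' ∈ f '' (nbhd (torus n) S) := by
      intro v hfv hA
      refine ⟨v, ⟨?_, u, huS, hA⟩, hfv⟩
      intro hvS
      exact hv'nS ⟨v, hvS, hfv⟩
    have hAdj : ∀ v : ZMod n × ZMod n,
        (v - u = (1,0) ∨ v - u = (0,1) ∨ u - v = (1,0) ∨ u - v = (0,1)) →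
        f v ≠ f u → (torus n).Adj u v := by
      intro v hrel hnev
      have hne' : u ≠ v := fun h => hnev (by rw [h])
      simp only [torus, SimpleGraph.fromRel_adj]
      exact ⟨hne', by tauto⟩
    rcases hcases with ⟨h1, h2⟩ | ⟨h1, h2⟩ | ⟨h1, h2⟩ | ⟨h1, h2⟩
    · refine hmem (u.1 + 1, u.2) ?_ ?_
      · have key : u.1 + 1 - (r+1) = (u.1 - (r+1)) + 1 := by ring
        simp only [hf, key]
        rw [hvadd _ (by omega)]
        refine Prod.ext ?_ ?_ <;> simp [h1, h2, hfu1, hfu2]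
      · refine hAdj _ (Or.inl ?_) ?_
        · refine Prod.ext ?_ ?_ <;> simp
        · intro h; apply hne
          rw [show f (u.1+1, u.2) = v' from ?_] at h
          · exact h.symm
          · have key : u.1 + 1 - (r+1) = (u.1 - (r+1)) + 1 := by ring
            simp only [hf, key]
            rw [hvadd _ (by omega)]
            refine Prod.ext ?_ ?_ <;> simp [h1, h2, hfu1, hfu2]
    · refine hmem (u.1 - 1, u.2) ?_ ?_
      · have key : u.1 - 1 - (r+1) = (u.1 - (r+1)) - 1 := by ring
        simp only [hf, key]
        rw [hvsub _ (by omega)]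
        refine Prod.ext ?_ ?_ <;> dsimp only <;> simp only [h1, h2, hfu1, hfu2] <;> omega
      · refine hAdj _ (Or.inr (Or.inr (Or.inl ?_))) ?_
        · refine Prod.ext ?_ ?_ <;> simp
        · intro h; apply hne
          rw [show f (u.1-1, u.2) = v' from ?_] at h
          · exact h.symm
          · have key : u.1 - 1 - (r+1) = (u.1 - (r+1)) - 1 := by ring
            simp only [hf, key]
            rw [hvsub _ (by omega)]
            refine Prod.ext ?_ ?_ <;> dsimp only <;> simp only [h1, h2, hfu1, hfu2] <;> omega
    · refine hmem (u.1, u.2 + 1) ?_ ?_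
      · have key : u.2 + 1 - (c+1) = (u.2 - (c+1)) + 1 := by ring
        simp only [hf, key]
        rw [hvadd _ (by omega)]
        refine Prod.ext ?_ ?_ <;> simp [h1, h2, hfu1, hfu2]
      · refine hAdj _ (Or.inr (Or.inl ?_)) ?_
        · refine Prod.ext ?_ ?_ <;> simp
        · intro h; apply hne
          rw [show f (u.1, u.2+1) = v' from ?_] at h
          · exact h.symm
          · have key : u.2 + 1 - (c+1) = (u.2 - (c+1)) + 1 := by ring
            simp only [hf, key]
            rw [hvadd _ (by omega)]
            refine Prod.ext ?_ ?_ <;> simp [h1, h2, hfu1, hfu2]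
    · refine hmem (u.1, u.2 - 1) ?_ ?_
      · have key : u.2 - 1 - (c+1) = (u.2 - (c+1)) - 1 := by ring
        simp only [hf, key]
        rw [hvsub _ (by omega)]
        refine Prod.ext ?_ ?_ <;> dsimp only <;> simp only [h1, h2, hfu1, hfu2] <;> omega
      · refine hAdj _ (Or.inr (Or.inr (Or.inr ?_))) ?_
        · refine Prod.ext ?_ ?_ <;> simp
        · intro h; apply hne
          rw [show f (u.1, u.2-1) = v' from ?_] at h
          · exact h.symm
          · have key : u.2 - 1 - (c+1) = (u.2 - (c+1)) - 1 := by ring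
            simp only [hf, key]
            rw [hvsub _ (by omega)]
            refine Prod.ext ?_ ?_ <;> dsimp only <;> simp only [h1, h2, hfu1, hfu2] <;> omega
  have hSfin : S.Finite := Set.toFinite S
  have hNfin : (nbhd (torus n) S).Finite := Set.toFinite _
  have h1 : bInf S.ncard ≤ (nbhd intGrid (f '' S)).ncard := by
    apply Nat.sInf_le
    exact ⟨f '' S, hSfin.image f, Set.ncard_image_of_injective S hfinj, rfl⟩
  calc bInf S.ncard ≤ (nbhd intGrid (f '' S)).ncard := h1
    _ ≤ (f '' (nbhd (torus n) S)).ncard := Set.ncard_le_ncard hsub (hNfin.image f)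
    _ = (nbhd (torus n) S).ncard := Set.ncard_image_of_injective _ hfinj
end

section
/- Let S be a connected subset of the n×n toroidal grid T_n. If there exist two rows and two columns of T_n that do not intersect S, then there exist two consecutive rows that do not intersect S and two consecutive columns that do not intersect S. -/
lemma val_one_big (n : ℕ) (hn : 3 ≤ n) : (1 : ZMod n).val = 1 := by
  have h := ZMod.val_natCast (n := n) 1
  simp only [Nat.cast_one] at h
  rw [h, Nat.mod_eq_of_lt (by omega)]

lemma step_lemma (n : ℕ) (hn : 3 ≤ n) (d : ℕ) (hd : 1 < d) (hdn : d < n)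
    (x y : ZMod n) (hstep : y - x = 0 ∨ y - x = 1 ∨ y - x = -1)
    (hy0 : y ≠ 0) (hyd : y.val ≠ d) (hx0 : 0 < x.val) (hxd : x.val < d) :
    0 < y.val ∧ y.val < d := by
  haveI : NeZero n := ⟨by omega⟩
  have h1 : (1 : ZMod n).val = 1 := val_one_big n hn
  have hyv0 : y.val ≠ 0 := fun h => hy0 (by rwa [ZMod.val_eq_zero] at h)
  rcases hstep with h | h | h
  · have hxy : y = x := by linear_combination h
    subst hxy; exact ⟨hx0, hxd⟩
  · have hy : y = x + 1 := by linear_combination h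
    have hv : y.val = (x.val + (1 : ZMod n).val) % n := by rw [hy, ZMod.val_add]
    rw [h1, Nat.mod_eq_of_lt (by omega)] at hv
    omega
  · have hy : x = y + 1 := by linear_combination -h
    have hv : x.val = (y.val + (1 : ZMod n).val) % n := by rw [hy, ZMod.val_add]
    rw [h1] at hv
    have hyn : y.val < n := ZMod.val_lt y
    rcases Nat.lt_or_ge (y.val + 1) n with hc | hc
    · rw [Nat.mod_eq_of_lt hc] at hv; omega
    · have hn1 : y.val + 1 = n := by omega
      rw [hn1, Nat.mod_self] at hv
      omega

lemma arc_lemma (n : ℕ) (hn : 3 ≤ n) (S : Set (ZMod n × ZMod n))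
    (hconn : ((torus n).induce S).Connected)
    (f : ZMod n × ZMod n → ZMod n)
    (hf : ∀ u v, (torus n).Adj u v → f v - f u = 0 ∨ f v - f u = 1 ∨ f v - f u = -1)
    (r₁ r₂ : ZMod n) (hne : r₁ ≠ r₂)
    (h₁ : ∀ p ∈ S, f p ≠ r₁) (h₂ : ∀ p ∈ S, f p ≠ r₂) :
    ∃ r : ZMod n, (∀ p ∈ S, f p ≠ r) ∧ (∀ p ∈ S, f p ≠ r + 1) := by
  haveI : NeZero n := ⟨by omega⟩
  have h1 : (1 : ZMod n).val = 1 := val_one_big n hn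
  by_contra hcon
  push_neg at hcon
  obtain ⟨a, haS, hfa⟩ := hcon r₁ h₁
  obtain ⟨b, hbS, hfb⟩ := hcon r₂ h₂
  set d : ℕ := (r₂ - r₁).val with hd
  have hdn : d < n := ZMod.val_lt _
  have hd0 : d ≠ 0 := by
    intro h
    have h' : r₂ - r₁ = 0 := (ZMod.val_eq_zero _).mp h
    exact hne (by linear_combination -h')
  have hd1 : d ≠ 1 := by
    intro h
    have h' : (r₂ - r₁).val = (1 : ZMod n).val := by rw [h1, ← hd, h]
    have h'' : r₂ - r₁ = 1 := ZMod.val_injective n h'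
    exact h₂ a haS (by rw [hfa]; linear_combination -h'')
  have hdd : 1 < d := by omega
  have key : ∀ (x y : ↑S), ((torus n).induce S).Walk x y →
      (0 < (f x.val - r₁).val ∧ (f x.val - r₁).val < d) →
      (0 < (f y.val - r₁).val ∧ (f y.val - r₁).val < d) := by
    intro x y W
    induction W with
    | nil => exact id
    | @cons u v w hadj W ih =>
      intro hx
      apply ih
      have hadj' : (torus n).Adj u.val v.val := hadj
      have hstep := hf u.val v.val hadj'
      have hsub : (f v.val - r₁) - (f u.val - r₁) = f v.val - f u.val := by ring
      have hy0 : f v.val - r₁ ≠ 0 := by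
        intro h
        exact h₁ v.val v.property (by linear_combination h)
      have hyd : (f v.val - r₁).val ≠ d := by
        intro h
        have h' : f v.val - r₁ = r₂ - r₁ := ZMod.val_injective n h
        exact h₂ v.val v.property (by linear_combination h')
      exact step_lemma n hn d hdd hdn _ _ (by rw [hsub]; exact hstep) hy0 hyd hx.1 hx.2
  obtain ⟨W⟩ := hconn.preconnected ⟨a, haS⟩ ⟨b, hbS⟩
  have hstart : 0 < (f a - r₁).val ∧ (f a - r₁).val < d := by
    have h' : f a - r₁ = 1 := by rw [hfa]; ring
    rw [h', h1]; omega
  have hend := key _ _ W hstart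
  have he : f b - r₁ = (r₂ - r₁) + 1 := by rw [hfb]; ring
  rw [he] at hend
  have hv : ((r₂ - r₁) + 1).val = ((r₂ - r₁).val + (1 : ZMod n).val) % n :=
    ZMod.val_add _ _
  rw [h1, ← hd] at hv
  rcases Nat.lt_or_ge (d + 1) n with hc | hc
  · rw [Nat.mod_eq_of_lt hc] at hv; omega
  · have hdn1 : d + 1 = n := by omega
    rw [hdn1, Nat.mod_self] at hv
    omega

theorem consecutive_empty_rows_cols (n : ℕ) (hn : 3 ≤ n) (S : Set (ZMod n × ZMod n))
    (hconn : ((torus n).induce S).Connected)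
    (hrows : ∃ r₁ r₂ : ZMod n, r₁ ≠ r₂ ∧ (∀ p ∈ S, p.1 ≠ r₁) ∧ (∀ p ∈ S, p.1 ≠ r₂))
    (hcols : ∃ c₁ c₂ : ZMod n, c₁ ≠ c₂ ∧ (∀ p ∈ S, p.2 ≠ c₁) ∧ (∀ p ∈ S, p.2 ≠ c₂)) :
    (∃ r : ZMod n, (∀ p ∈ S, p.1 ≠ r) ∧ (∀ p ∈ S, p.1 ≠ r + 1)) ∧
    (∃ c : ZMod n, (∀ p ∈ S, p.2 ≠ c) ∧ (∀ p ∈ S, p.2 ≠ c + 1)) := by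
  have hadj : ∀ u v : ZMod n × ZMod n, (torus n).Adj u v →
      ((v.1 - u.1 = 0 ∨ v.1 - u.1 = 1 ∨ v.1 - u.1 = -1) ∧
       (v.2 - u.2 = 0 ∨ v.2 - u.2 = 1 ∨ v.2 - u.2 = -1)) := by
    intro u v h
    rw [torus, SimpleGraph.fromRel_adj] at h
    obtain ⟨-, h⟩ := h
    rcases h with (h | h) | (h | h) <;>
        rw [Prod.ext_iff] at h <;>
        simp only [Prod.fst_sub, Prod.snd_sub, Prod.fst_one, Prod.snd_one,
          Prod.mk.injEq] at h <;>
        obtain ⟨ha, hb⟩ := h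
    · exact ⟨Or.inr (Or.inl ha), Or.inl hb⟩
    · exact ⟨Or.inl ha, Or.inr (Or.inl hb)⟩
    · exact ⟨Or.inr (Or.inr (by linear_combination -ha)), Or.inl (by linear_combination -hb)⟩
    · exact ⟨Or.inl (by linear_combination -ha), Or.inr (Or.inr (by linear_combination -hb))⟩
  obtain ⟨r₁, r₂, hr, hr₁, hr₂⟩ := hrows
  obtain ⟨c₁, c₂, hc, hc₁, hc₂⟩ := hcols
  constructor
  · exact arc_lemma n hn S hconn Prod.fst (fun u v h => (hadj u v h).1) r₁ r₂ hr hr₁ hr₂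
  · exact arc_lemma n hn S hconn Prod.snd (fun u v h => (hadj u v h).2) c₁ c₂ hc hc₁ hc₂
end

section
/- Let S be a subset of the n×n toroidal grid T_n and suppose there exist a row R and a column C with S ∩ (R ∪ C) = ∅, |N(S) ∩ R| ≤ 1, and |N(S) ∩ C| ≤ 1. Then |N(S)| ≥ b(|S|) - 2, where b(s) is the minimum neighborhood size of a size-s set in the infinite grid ℤ². -/
namespace TorusAux

/-- The map from the torus to `ℤ²` using representatives of `p - (r,c)`. -/
def F (n : ℕ) (r c : ZMod n) (p : ZMod n × ZMod n) : ℤ × ℤ :=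
  (((p.1 - r).val : ℤ), ((p.2 - c).val : ℤ))

/-- The map back from `ℤ²` to the torus. -/
def R (n : ℕ) (r c : ZMod n) (w : ℤ × ℤ) : ZMod n × ZMod n :=
  (r + (w.1 : ZMod n), c + (w.2 : ZMod n))

lemma int_dvd_small {n : ℕ} {a : ℤ} (h : (n : ℤ) ∣ a) (h1 : -(n : ℤ) < a) (h2 : a < n) :
    a = 0 := by
  rcases h with ⟨k, rfl⟩
  have hn0 : (0:ℤ) ≤ n := Int.natCast_nonneg n
  rcases lt_trichotomy k 0 with hk | hk | hk
  · nlinarith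
  · simp [hk]
  · nlinarith

lemma dvd_bounds {n : ℕ} {a : ℤ} (h : (n : ℤ) ∣ a) (h0 : 0 ≤ a) (h1 : a ≤ n) :
    a = 0 ∨ a = n := by
  rcases eq_or_lt_of_le h1 with h1' | h1'
  · right; exact h1'
  · left; exact int_dvd_small h (by omega) h1'

lemma not_dvd_bounds {n : ℕ} {a : ℤ} (h : ¬ (n : ℤ) ∣ a) (h0 : 0 ≤ a) (h1 : a ≤ n) :
    1 ≤ a ∧ a ≤ (n:ℤ) - 1 := by
  constructor
  · rcases eq_or_lt_of_le h0 with h' | h'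
    · exact absurd (h' ▸ dvd_zero _) h
    · omega
  · rcases eq_or_lt_of_le h1 with h' | h'
    · exact absurd (h' ▸ dvd_refl _) h
    · omega

lemma F_inj (n : ℕ) [NeZero n] (r c : ZMod n) : Function.Injective (F n r c) := by
  intro p q h
  have h1 : ((p.1 - r).val : ℤ) = ((q.1 - r).val : ℤ) := congrArg Prod.fst h
  have h2 : ((p.2 - c).val : ℤ) = ((q.2 - c).val : ℤ) := congrArg Prod.snd h
  have h1' : p.1 - r = q.1 - r := ZMod.val_injective n (by exact_mod_cast h1)
  have h2' : p.2 - c = q.2 - c := ZMod.val_injective n (by exact_mod_cast h2)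
  have : p.1 = q.1 := by linear_combination h1'
  have : p.2 = q.2 := by linear_combination h2'
  exact Prod.ext ‹p.1 = q.1› this

lemma RF (n : ℕ) [NeZero n] (r c : ZMod n) (p : ZMod n × ZMod n) : R n r c (F n r c p) = p := by
  have h1 : (((p.1 - r).val : ℤ) : ZMod n) = p.1 - r := by
    push_cast
    exact ZMod.natCast_rightInverse (p.1 - r)
  have h2 : (((p.2 - c).val : ℤ) : ZMod n) = p.2 - c := by
    push_cast
    exact ZMod.natCast_rightInverse (p.2 - c)
  refine Prod.ext ?_ ?_ <;> simp only [R, F, h1, h2] <;> ring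

lemma val_intCast_eq {n : ℕ} [NeZero n] {a : ℤ} (h0 : 0 ≤ a) (h1 : a < n) :
    ((((a : ZMod n)).val : ℤ)) = a := by
  lift a to ℕ using h0
  have : a < n := by exact_mod_cast h1
  rw [Int.cast_natCast, ZMod.val_cast_of_lt this]



lemma key (n : ℕ) (hn : 3 ≤ n) (S : Set (ZMod n × ZMod n)) (r c : ZMod n)
    (hS : ∀ p ∈ S, p.1 ≠ r ∧ p.2 ≠ c) :
    ∀ w ∈ nbhd intGrid (F n r c '' S),
      (0 ≤ w.1 ∧ w.1 ≤ n ∧ 0 ≤ w.2 ∧ w.2 ≤ n) ∧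
      ((n : ℤ) ∣ w.1 → 1 ≤ w.2 ∧ w.2 ≤ (n:ℤ) - 1) ∧
      ((n : ℤ) ∣ w.2 → 1 ≤ w.1 ∧ w.1 ≤ (n:ℤ) - 1) ∧
      R n r c w ∈ nbhd (torus n) S := by
  haveI : NeZero n := ⟨by omega⟩
  haveI : Fact (1 < n) := ⟨by omega⟩
  rintro w ⟨hwT, u, ⟨p, hpS, rfl⟩, hadj⟩
  rw [intGrid, SimpleGraph.fromRel_adj] at hadj
  obtain ⟨hne, hrel⟩ := hadj
  set u1 : ℤ := ((p.1 - r).val : ℤ) with hu1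
  set u2 : ℤ := ((p.2 - c).val : ℤ) with hu2
  have hFp : F n r c p = (u1, u2) := rfl
  -- bounds on u
  have hp1 : p.1 - r ≠ 0 := sub_ne_zero.2 (hS p hpS).1
  have hp2 : p.2 - c ≠ 0 := sub_ne_zero.2 (hS p hpS).2
  have hu1b : 1 ≤ u1 ∧ u1 ≤ (n:ℤ) - 1 := by
    have h1 : (p.1 - r).val < n := ZMod.val_lt _
    have h2 : (p.1 - r).val ≠ 0 := by
      intro h; exact hp1 ((ZMod.val_eq_zero (p.1 - r)).mp h)
    omega
  have hu2b : 1 ≤ u2 ∧ u2 ≤ (n:ℤ) - 1 := by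
    have h1 : (p.2 - c).val < n := ZMod.val_lt _
    have h2 : (p.2 - c).val ≠ 0 := by
      intro h; exact hp2 ((ZMod.val_eq_zero (p.2 - c)).mp h)
    omega
  -- case analysis on the adjacency
  have hd : (u1 - w.1).natAbs + (u2 - w.2).natAbs = 1 := by
    rcases hrel with h | h
    · simpa [hFp] using h
    · simp only [hFp] at h
      omega
  have hcase : (w.1 = u1 ∧ (w.2 = u2 + 1 ∨ w.2 = u2 - 1)) ∨
      (w.2 = u2 ∧ (w.1 = u1 + 1 ∨ w.1 = u1 - 1)) := by omega
  have hbounds : 0 ≤ w.1 ∧ w.1 ≤ n ∧ 0 ≤ w.2 ∧ w.2 ≤ n := by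
    obtain ⟨h1, h2⟩ := hu1b; obtain ⟨h3, h4⟩ := hu2b
    omega
  refine ⟨hbounds, ?_, ?_, ?_⟩
  · intro hdvd
    rcases dvd_bounds hdvd hbounds.1 hbounds.2.1 with h | h <;> omega
  · intro hdvd
    rcases dvd_bounds hdvd hbounds.2.2.1 hbounds.2.2.2 with h | h <;> omega
  · -- membership in the torus neighborhood
    have hRw1 : (R n r c w).1 = r + (w.1 : ZMod n) := rfl
    have hRw2 : (R n r c w).2 = c + (w.2 : ZMod n) := rfl
    have hp1' : p.1 = r + (u1 : ZMod n) := by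
      have := congrArg Prod.fst (RF n r c p); exact this.symm
    have hp2' : p.2 = c + (u2 : ZMod n) := by
      have := congrArg Prod.snd (RF n r c p); exact this.symm
    have hsub1 : (R n r c w).1 - p.1 = ((w.1 - u1 : ℤ) : ZMod n) := by
      rw [hRw1, hp1']; push_cast; ring
    have hsub2 : (R n r c w).2 - p.2 = ((w.2 - u2 : ℤ) : ZMod n) := by
      rw [hRw2, hp2']; push_cast; ring
    have hone : ((1 : ℤ) : ZMod n) = 1 := by push_cast; ring
    have honene : (1 : ZMod n) ≠ 0 := one_ne_zero
    -- R w ∉ S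
    have hnotS : R n r c w ∉ S := by
      intro hmem
      obtain ⟨hq1, hq2⟩ := hS _ hmem
      have hnd1 : ¬ (n:ℤ) ∣ w.1 := by
        intro hd1
        apply hq1
        rw [hRw1, (ZMod.intCast_zmod_eq_zero_iff_dvd w.1 n).2 hd1, add_zero]
      have hnd2 : ¬ (n:ℤ) ∣ w.2 := by
        intro hd2
        apply hq2
        rw [hRw2, (ZMod.intCast_zmod_eq_zero_iff_dvd w.2 n).2 hd2, add_zero]
      have hb1 := not_dvd_bounds hnd1 hbounds.1 hbounds.2.1
      have hb2 := not_dvd_bounds hnd2 hbounds.2.2.1 hbounds.2.2.2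
      apply hwT
      refine ⟨R n r c w, hmem, ?_⟩
      have e1 : ((R n r c w).1 - r : ZMod n) = ((w.1 : ℤ) : ZMod n) := by
        rw [hRw1]; ring
      have e2 : ((R n r c w).2 - c : ZMod n) = ((w.2 : ℤ) : ZMod n) := by
        rw [hRw2]; ring
      have : F n r c (R n r c w) = w := by
        refine Prod.ext ?_ ?_
        · show (((R n r c w).1 - r).val : ℤ) = w.1
          rw [e1]; exact val_intCast_eq hbounds.1 (by omega)
        · show (((R n r c w).2 - c).val : ℤ) = w.2
          rw [e2]; exact val_intCast_eq hbounds.2.2.1 (by omega)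
      rw [this]
    refine ⟨hnotS, p, hpS, ?_⟩
    rw [torus, SimpleGraph.fromRel_adj]
    rcases hcase with ⟨he1, he2 | he2⟩ | ⟨he1, he2 | he2⟩
    · -- w = u + (0,1) : R w - p = (0,1)
      have hδ : R n r c w - p = (0, 1) := by
        refine Prod.ext ?_ ?_
        · show (R n r c w).1 - p.1 = 0
          rw [hsub1, he1]; push_cast; ring
        · show (R n r c w).2 - p.2 = 1
          rw [hsub2, he2]; push_cast; ring
      refine ⟨?_, Or.inl (Or.inr hδ)⟩
      intro h
      rw [h, sub_self] at hδ
      exact honene (congrArg Prod.snd hδ).symm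
    · have hδ : p - R n r c w = (0, 1) := by
        refine Prod.ext ?_ ?_
        · show p.1 - (R n r c w).1 = 0
          have := hsub1; rw [he1] at this
          have h0 : (R n r c w).1 - p.1 = 0 := by rw [this]; push_cast; ring
          linear_combination -h0
        · show p.2 - (R n r c w).2 = 1
          have h0 : (R n r c w).2 - p.2 = -1 := by rw [hsub2, he2]; push_cast; ring
          linear_combination -h0
      refine ⟨?_, Or.inr (Or.inr hδ)⟩
      intro h
      rw [h, sub_self] at hδ
      exact honene (congrArg Prod.snd hδ).symm
    · have hδ : R n r c w - p = (1, 0) := by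
        refine Prod.ext ?_ ?_
        · show (R n r c w).1 - p.1 = 1
          rw [hsub1, he2]; push_cast; ring
        · show (R n r c w).2 - p.2 = 0
          rw [hsub2, he1]; push_cast; ring
      refine ⟨?_, Or.inl (Or.inl hδ)⟩
      intro h
      rw [h, sub_self] at hδ
      exact honene (congrArg Prod.fst hδ).symm
    · have hδ : p - R n r c w = (1, 0) := by
        refine Prod.ext ?_ ?_
        · show p.1 - (R n r c w).1 = 1
          have h0 : (R n r c w).1 - p.1 = -1 := by rw [hsub1, he2]; push_cast; ring
          linear_combination -h0
        · show p.2 - (R n r c w).2 = 0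
          have h0 : (R n r c w).2 - p.2 = 0 := by rw [hsub2, he1]; push_cast; ring
          linear_combination -h0
      refine ⟨?_, Or.inr (Or.inl hδ)⟩
      intro h
      rw [h, sub_self] at hδ
      exact honene (congrArg Prod.fst hδ).symm

end TorusAux

theorem nbhd_lb_of_almost_empty_row_col (n : ℕ) (hn : 3 ≤ n) (S : Set (ZMod n × ZMod n))
    (r c : ZMod n)
    (hS : ∀ p ∈ S, p.1 ≠ r ∧ p.2 ≠ c)
    (hr : (nbhd (torus n) S ∩ {p | p.1 = r}).ncard ≤ 1)
    (hc : (nbhd (torus n) S ∩ {p | p.2 = c}).ncard ≤ 1) :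
    bInf S.ncard - 2 ≤ (nbhd (torus n) S).ncard := by
  haveI : NeZero n := ⟨by omega⟩
  haveI : Fact (1 < n) := ⟨by omega⟩
  classical
  set T := TorusAux.F n r c '' S with hT
  set N₂ := nbhd intGrid T with hN2
  set NT := nbhd (torus n) S with hNTdef
  have hkey := TorusAux.key n hn S r c hS
  have hN2fin : N₂.Finite := by
    apply Set.Finite.subset ((Set.finite_Icc (0:ℤ) (n:ℤ)).prod (Set.finite_Icc (0:ℤ) (n:ℤ)))
    intro w hw
    obtain ⟨⟨a, b, c', d⟩, _, _, _⟩ := hkey w hw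
    exact ⟨⟨a, b⟩, ⟨c', d⟩⟩
  set A := {w ∈ N₂ | ¬ (n:ℤ) ∣ w.1 ∧ ¬ (n:ℤ) ∣ w.2} with hA
  set B₁ := {w ∈ N₂ | (n:ℤ) ∣ w.1} with hB1
  set B₂ := {w ∈ N₂ | (n:ℤ) ∣ w.2 ∧ ¬ (n:ℤ) ∣ w.1} with hB2
  have hAfin : A.Finite := hN2fin.subset (fun w hw => hw.1)
  have hB1fin : B₁.Finite := hN2fin.subset (fun w hw => hw.1)
  have hB2fin : B₂.Finite := hN2fin.subset (fun w hw => hw.1)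
  have hcover : N₂ ⊆ A ∪ B₁ ∪ B₂ := by
    intro w hw
    by_cases h1 : (n:ℤ) ∣ w.1
    · exact Or.inl (Or.inr ⟨hw, h1⟩)
    · by_cases h2 : (n:ℤ) ∣ w.2
      · exact Or.inr ⟨hw, h2, h1⟩
      · exact Or.inl (Or.inl ⟨hw, h1, h2⟩)
  have hsplit : N₂.ncard ≤ A.ncard + B₁.ncard + B₂.ncard := by
    calc N₂.ncard ≤ (A ∪ B₁ ∪ B₂).ncard :=
          Set.ncard_le_ncard hcover ((hAfin.union hB1fin).union hB2fin)
      _ ≤ (A ∪ B₁).ncard + B₂.ncard := Set.ncard_union_le _ _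
      _ ≤ A.ncard + B₁.ncard + B₂.ncard := by
          have := Set.ncard_union_le A B₁; omega
  -- the distinguished subsets of NT
  set X₁ := (NT ∩ {p | p.1 = r}) \ {p | p.2 = c} with hX1
  set X₂ := (NT ∩ {p | p.2 = c}) \ {p | p.1 = r} with hX2
  set D₀ := NT \ ({p | p.1 = r} ∪ {p | p.2 = c}) with hD0
  have hX1le : X₁.ncard ≤ 1 :=
    le_trans (Set.ncard_le_ncard Set.diff_subset (Set.toFinite _)) hr
  have hX2le : X₂.ncard ≤ 1 :=
    le_trans (Set.ncard_le_ncard Set.diff_subset (Set.toFinite _)) hc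
  -- helper: cast equality gives dvd of difference
  have cast_dvd : ∀ a b : ℤ, ((a : ZMod n) = (b : ZMod n)) → (n:ℤ) ∣ (b - a) := by
    intro a b h
    exact Int.ModEq.dvd ((ZMod.intCast_eq_intCast_iff a b n).mp h)
  -- |A| ≤ |D₀|
  have hAcard : A.ncard ≤ D₀.ncard := by
    have hinj : Set.InjOn (TorusAux.R n r c) A := by
      rintro w hw w' hw' heq
      obtain ⟨hb, _, _, _⟩ := hkey w hw.1
      obtain ⟨hb', _, _, _⟩ := hkey w' hw'.1
      have h1 := TorusAux.not_dvd_bounds hw.2.1 hb.1 hb.2.1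
      have h2 := TorusAux.not_dvd_bounds hw.2.2 hb.2.2.1 hb.2.2.2
      have h1' := TorusAux.not_dvd_bounds hw'.2.1 hb'.1 hb'.2.1
      have h2' := TorusAux.not_dvd_bounds hw'.2.2 hb'.2.2.1 hb'.2.2.2
      have e1 : (w.1 : ZMod n) = (w'.1 : ZMod n) := by
        have h := congrArg Prod.fst heq
        simp only [TorusAux.R] at h
        exact add_left_cancel h
      have e2 : (w.2 : ZMod n) = (w'.2 : ZMod n) := by
        have h := congrArg Prod.snd heq
        simp only [TorusAux.R] at h
        exact add_left_cancel h
      have d1 := TorusAux.int_dvd_small (cast_dvd _ _ e1) (by omega) (by omega)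
      have d2 := TorusAux.int_dvd_small (cast_dvd _ _ e2) (by omega) (by omega)
      exact Prod.ext (by omega) (by omega)
    have hsub : TorusAux.R n r c '' A ⊆ D₀ := by
      rintro _ ⟨w, hw, rfl⟩
      obtain ⟨hb, _, _, hNT⟩ := hkey w hw.1
      refine ⟨hNT, ?_⟩
      rintro (h | h)
      · have : (w.1 : ZMod n) = 0 := by
          have h' : r + (w.1 : ZMod n) = r := h
          linear_combination h'
        exact hw.2.1 ((ZMod.intCast_zmod_eq_zero_iff_dvd w.1 n).mp this)
      · have : (w.2 : ZMod n) = 0 := by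
          have h' : c + (w.2 : ZMod n) = c := h
          linear_combination h'
        exact hw.2.2 ((ZMod.intCast_zmod_eq_zero_iff_dvd w.2 n).mp this)
    calc A.ncard = (TorusAux.R n r c '' A).ncard := (Set.ncard_image_of_injOn hinj).symm
      _ ≤ D₀.ncard := Set.ncard_le_ncard hsub (Set.toFinite _)
  -- |B₁| ≤ |X₁| + 1
  have hB1card : B₁.ncard ≤ X₁.ncard + 1 := by
    rcases Set.eq_empty_or_nonempty B₁ with h | ⟨w₀, hw₀⟩
    · simp [h]
    · have hmem : ∀ w ∈ B₁, TorusAux.R n r c w ∈ X₁ := by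
        intro w hw
        obtain ⟨hb, himp, _, hNT⟩ := hkey w hw.1
        have h2 := himp hw.2
        refine ⟨⟨hNT, ?_⟩, ?_⟩
        · show r + (w.1 : ZMod n) = r
          rw [(ZMod.intCast_zmod_eq_zero_iff_dvd w.1 n).mpr hw.2, add_zero]
        · intro hcc
          have h0 : (w.2 : ZMod n) = 0 := by
            have h' : c + (w.2 : ZMod n) = c := hcc
            linear_combination h'
          have hdvd := (ZMod.intCast_zmod_eq_zero_iff_dvd w.2 n).mp h0
          rcases TorusAux.dvd_bounds hdvd (by omega) (by omega) with h3 | h3 <;> omega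
      have hX1pos : 1 ≤ X₁.ncard :=
        (Set.ncard_pos (Set.toFinite _)).mpr ⟨_, hmem w₀ hw₀⟩
      have hsub : B₁ ⊆ {((0:ℤ), w₀.2), ((n:ℤ), w₀.2)} := by
        intro w hw
        have heq : TorusAux.R n r c w = TorusAux.R n r c w₀ :=
          (Set.ncard_le_one (Set.toFinite X₁)).mp hX1le _ (hmem w hw) _ (hmem w₀ hw₀)
        obtain ⟨hb, himp, _, _⟩ := hkey w hw.1
        obtain ⟨hb0, himp0, _, _⟩ := hkey w₀ hw₀.1
        have h2 := himp hw.2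
        have h20 := himp0 hw₀.2
        have e2 : (w.2 : ZMod n) = (w₀.2 : ZMod n) := by
          have h := congrArg Prod.snd heq
          simp only [TorusAux.R] at h
          exact add_left_cancel h
        have d2 := TorusAux.int_dvd_small (cast_dvd _ _ e2) (by omega) (by omega)
        rcases TorusAux.dvd_bounds hw.2 hb.1 hb.2.1 with h3 | h3
        · exact Or.inl (Prod.ext h3 (by omega))
        · exact Or.inr (Prod.ext h3 (by omega))
      calc B₁.ncard ≤ ({((0:ℤ), w₀.2), ((n:ℤ), w₀.2)} : Set (ℤ × ℤ)).ncard :=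
            Set.ncard_le_ncard hsub (Set.toFinite _)
        _ ≤ 2 := le_trans (Set.ncard_insert_le _ _) (by simp)
        _ ≤ X₁.ncard + 1 := by omega
  -- |B₂| ≤ |X₂| + 1
  have hB2card : B₂.ncard ≤ X₂.ncard + 1 := by
    rcases Set.eq_empty_or_nonempty B₂ with h | ⟨w₀, hw₀⟩
    · simp [h]
    · have hmem : ∀ w ∈ B₂, TorusAux.R n r c w ∈ X₂ := by
        intro w hw
        obtain ⟨hb, _, himp, hNT⟩ := hkey w hw.1
        have h2 := himp hw.2.1
        refine ⟨⟨hNT, ?_⟩, ?_⟩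
        · show c + (w.2 : ZMod n) = c
          rw [(ZMod.intCast_zmod_eq_zero_iff_dvd w.2 n).mpr hw.2.1, add_zero]
        · intro hcc
          have h0 : (w.1 : ZMod n) = 0 := by
            have h' : r + (w.1 : ZMod n) = r := hcc
            linear_combination h'
          exact hw.2.2 ((ZMod.intCast_zmod_eq_zero_iff_dvd w.1 n).mp h0)
      have hsub : B₂ ⊆ {(w₀.1, (0:ℤ)), (w₀.1, (n:ℤ))} := by
        intro w hw
        have heq : TorusAux.R n r c w = TorusAux.R n r c w₀ :=
          (Set.ncard_le_one (Set.toFinite X₂)).mp hX2le _ (hmem w hw) _ (hmem w₀ hw₀)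
        obtain ⟨hb, _, himp, _⟩ := hkey w hw.1
        obtain ⟨hb0, _, himp0, _⟩ := hkey w₀ hw₀.1
        have h2 := himp hw.2.1
        have h20 := himp0 hw₀.2.1
        have e1 : (w.1 : ZMod n) = (w₀.1 : ZMod n) := by
          have h := congrArg Prod.fst heq
          simp only [TorusAux.R] at h
          exact add_left_cancel h
        have d1 := TorusAux.int_dvd_small (cast_dvd _ _ e1) (by omega) (by omega)
        rcases TorusAux.dvd_bounds hw.2.1 hb.2.2.1 hb.2.2.2 with h3 | h3
        · exact Or.inl (Prod.ext (by omega) h3)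
        · exact Or.inr (Prod.ext (by omega) h3)
      calc B₂.ncard ≤ ({(w₀.1, (0:ℤ)), (w₀.1, (n:ℤ))} : Set (ℤ × ℤ)).ncard :=
            Set.ncard_le_ncard hsub (Set.toFinite _)
        _ ≤ 2 := le_trans (Set.ncard_insert_le _ _) (by simp)
        _ ≤ X₂.ncard + 1 := by
          have : 1 ≤ X₂.ncard := (Set.ncard_pos (Set.toFinite _)).mpr ⟨_, hmem w₀ hw₀⟩
          omega
  -- also fix B₁ bound using hX1pos
  -- NT lower bound
  have hdisj1 : Disjoint D₀ X₁ := by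
    rw [Set.disjoint_left]
    rintro p ⟨_, hp⟩ ⟨⟨_, h1⟩, _⟩
    exact hp (Or.inl h1)
  have hdisj2 : Disjoint (D₀ ∪ X₁) X₂ := by
    rw [Set.disjoint_left]
    rintro p hp ⟨⟨_, h2⟩, h1⟩
    rcases hp with ⟨_, hp⟩ | ⟨_, hpc⟩
    · exact hp (Or.inr h2)
    · exact hpc h2
  have hsum : D₀.ncard + X₁.ncard + X₂.ncard ≤ NT.ncard := by
    have h1 : (D₀ ∪ X₁ ∪ X₂).ncard = D₀.ncard + X₁.ncard + X₂.ncard := by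
      rw [Set.ncard_union_eq hdisj2 (Set.toFinite _) (Set.toFinite _),
        Set.ncard_union_eq hdisj1 (Set.toFinite _) (Set.toFinite _)]
    rw [← h1]
    refine Set.ncard_le_ncard ?_ (Set.toFinite _)
    rintro p ((⟨h, _⟩ | ⟨⟨h, _⟩, _⟩) | ⟨⟨h, _⟩, _⟩) <;> exact h
  have hmain : N₂.ncard ≤ NT.ncard + 2 := by omega
  have hbinf : bInf S.ncard ≤ N₂.ncard := by
    apply Nat.sInf_le
    exact ⟨T, (Set.toFinite S).image _,
      Set.ncard_image_of_injective S (TorusAux.F_inj n r c), rfl⟩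
  omega
end

section
/- The function b(s), defined as the minimum size of the open neighborhood of a size-s subset of the infinite grid ℤ², is non-decreasing in s. -/
lemma intGrid_adj_iff {a b : ℤ × ℤ} :
    intGrid.Adj a b ↔ (a.1 - b.1).natAbs + (a.2 - b.2).natAbs = 1 := by
  simp only [intGrid, SimpleGraph.fromRel_adj]
  constructor
  · rintro ⟨hne, h | h⟩
    · exact h
    · omega
  · intro h
    refine ⟨?_, Or.inl h⟩
    rintro rfl
    omega

lemma nbhd_finite {S : Set (ℤ × ℤ)} (hS : S.Finite) : (nbhd intGrid S).Finite := by
  have hsub : nbhd intGrid S ⊆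
      ⋃ u ∈ S, ({(u.1 + 1, u.2), (u.1 - 1, u.2), (u.1, u.2 + 1), (u.1, u.2 - 1)} :
        Set (ℤ × ℤ)) := by
    rintro v ⟨hv, u, hu, hadj⟩
    rw [intGrid_adj_iff] at hadj
    simp only [Set.mem_iUnion]
    refine ⟨u, hu, ?_⟩
    simp only [Set.mem_insert_iff, Set.mem_singleton_iff, Prod.ext_iff]
    omega
  exact Set.Finite.subset (hS.biUnion fun u _ => Set.toFinite _) hsub

lemma key {S : Set (ℤ × ℤ)} (hS : S.Finite) (hne : S.Nonempty) :
    ∃ v ∈ S, (nbhd intGrid (S \ {v})).ncard ≤ (nbhd intGrid S).ncard := by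
  obtain ⟨v, hvS, hmax⟩ := Set.exists_max_image S (fun p => toLex p) hS hne
  have hmax' : ∀ u ∈ S, u.1 < v.1 ∨ (u.1 = v.1 ∧ u.2 ≤ v.2) := by
    intro u hu
    have := hmax u hu
    rwa [Prod.Lex.le_iff] at this
  refine ⟨v, hvS, ?_⟩
  have hwS : ((v.1 + 1, v.2) : ℤ × ℤ) ∉ S := by
    intro h
    have := hmax' _ h
    simp only at this
    omega
  have hwN : ((v.1 + 1, v.2) : ℤ × ℤ) ∈ nbhd intGrid S := by
    refine ⟨hwS, v, hvS, ?_⟩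
    rw [intGrid_adj_iff]
    simp only
    omega
  have hsub : nbhd intGrid (S \ {v}) ⊆
      insert v (nbhd intGrid S \ {((v.1 + 1, v.2) : ℤ × ℤ)}) := by
    rintro u ⟨huS, z, hz, hadj⟩
    rcases eq_or_ne u v with rfl | huv
    · exact Set.mem_insert _ _
    · refine Set.mem_insert_of_mem _ ⟨⟨?_, z, hz.1, hadj⟩, ?_⟩
      · intro h
        exact huS ⟨h, huv⟩
      · rintro rfl
        have hadj' : (z.1 - (v.1 + 1)).natAbs + (z.2 - v.2).natAbs = 1 :=
          intGrid_adj_iff.mp hadj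
        have h1 := hmax' z hz.1
        have h2 : z ≠ v := hz.2
        have hzv : z.1 = v.1 ∧ z.2 = v.2 := by omega
        exact h2 (Prod.ext hzv.1 hzv.2)
  have hNfin := nbhd_finite hS
  calc (nbhd intGrid (S \ {v})).ncard
      ≤ (insert v (nbhd intGrid S \ {((v.1 + 1, v.2) : ℤ × ℤ)})).ncard :=
        Set.ncard_le_ncard hsub (hNfin.diff.insert _)
    _ ≤ (nbhd intGrid S \ {((v.1 + 1, v.2) : ℤ × ℤ)}).ncard + 1 := Set.ncard_insert_le _ _
    _ = (nbhd intGrid S).ncard - 1 + 1 := by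
        rw [Set.ncard_diff_singleton_of_mem hwN]
    _ = (nbhd intGrid S).ncard := by
        have : 0 < (nbhd intGrid S).ncard := (Set.ncard_pos hNfin).mpr ⟨_, hwN⟩
        omega

lemma cand_nonempty (s : ℕ) :
    {k | ∃ S : Set (ℤ × ℤ), S.Finite ∧ S.ncard = s ∧ (nbhd intGrid S).ncard = k}.Nonempty := by
  obtain ⟨S, -, hfin, hcard⟩ :=
    (Set.infinite_univ (α := ℤ × ℤ)).exists_subset_ncard_eq s
  exact ⟨_, S, hfin, hcard, rfl⟩

theorem bInf_monotone : Monotone bInf := by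
  apply monotone_nat_of_le_succ
  intro s
  obtain ⟨S, hfin, hcard, hk⟩ := Nat.sInf_mem (cand_nonempty (s + 1))
  have hne : S.Nonempty := by
    rw [← Set.ncard_pos hfin, hcard]
    omega
  obtain ⟨v, hvS, hle⟩ := key hfin hne
  have hcard' : (S \ {v}).ncard = s := by
    rw [Set.ncard_diff_singleton_of_mem hvS, hcard]
    omega
  have h1 : bInf s ≤ (nbhd intGrid (S \ {v})).ncard :=
    Nat.sInf_le ⟨S \ {v}, hfin.diff, hcard', rfl⟩
  calc bInf s ≤ (nbhd intGrid (S \ {v})).ncard := h1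
    _ ≤ (nbhd intGrid S).ncard := hle
    _ = bInf (s + 1) := hk
end

section
/- Let n = 2m+1 with m ≥ 1, let T be the n×n toroidal grid, let v be a vertex, let R be the row of v and C the column of v. Then there exist 4m internally vertex-disjoint paths between R ∖ {v} and C ∖ {v} in T that together cover all vertices of V(T) ∖ (R ∪ C). -/
namespace TorusAux

open SimpleGraph

variable {m : ℕ}

abbrev Z (m : ℕ) := ZMod (2*m+1)
abbrev Vt (m : ℕ) := Z m × Z m

/-! ### Basic `ZMod` facts -/

lemma cast_inj (hm : 1 ≤ m) {a b : ℕ} (ha : a ≤ 2*m) (hb : b ≤ 2*m)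
    (h : (a : Z m) = (b : Z m)) : a = b := by
  have := congrArg ZMod.val h
  rwa [ZMod.val_natCast_of_lt (by omega), ZMod.val_natCast_of_lt (by omega)] at this

lemma cast_ne_zero (hm : 1 ≤ m) {a : ℕ} (h1 : 1 ≤ a) (ha : a ≤ 2*m) : (a : Z m) ≠ 0 := by
  intro h
  have : a = 0 := cast_inj hm ha (by omega) (by simpa using h)
  omega

lemma one_ne_zero' (hm : 1 ≤ m) : (1 : Z m) ≠ 0 := by
  haveI : Fact (1 < 2*m+1) := ⟨by omega⟩
  exact one_ne_zero

lemma one_ne_neg_one (hm : 1 ≤ m) : (1 : Z m) ≠ -1 := by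
  intro h
  have h2 : ((2:ℕ) : Z m) = ((0:ℕ) : Z m) := by
    push_cast
    linear_combination h
  have := cast_inj hm (a := 2) (b := 0) (by omega) (by omega) h2
  omega

lemma pm_mul_cancel {s x y : Z m} (hs : s = 1 ∨ s = -1) (h : s * x = s * y) : x = y := by
  rcases hs with rfl | rfl
  · simpa using h
  · simpa using h

lemma pm_mul_ne_zero {s x : Z m} (hs : s = 1 ∨ s = -1) (hx : x ≠ 0) : s * x ≠ 0 := by
  intro h
  exact hx (pm_mul_cancel hs (by simpa using h))

/-! ### Sign–magnitude decomposition -/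

def mg (m : ℕ) (z : Z m) : ℕ := if z.val ≤ m then z.val else (2*m+1) - z.val
def sgn (m : ℕ) (z : Z m) : Z m := if z.val ≤ m then 1 else -1

lemma val_cast_eq (z : Z m) : ((z.val : ℕ) : Z m) = z := by
  haveI : NeZero (2*m+1) := ⟨by omega⟩
  rw [ZMod.natCast_val, ZMod.cast_id]

lemma sgn_mul_mg (z : Z m) : sgn m z * (mg m z : Z m) = z := by
  unfold sgn mg
  split
  · rw [one_mul, val_cast_eq]
  · have hv : z.val < 2*m+1 := ZMod.val_lt z
    rw [Nat.cast_sub hv.le, ZMod.natCast_self, val_cast_eq]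
    ring

lemma mg_bounds (hm : 1 ≤ m) {z : Z m} (hz : z ≠ 0) : 1 ≤ mg m z ∧ mg m z ≤ m := by
  haveI : NeZero (2*m+1) := ⟨by omega⟩
  have h0 : z.val ≠ 0 := fun h => hz ((ZMod.val_eq_zero z).mp h)
  have h1 : z.val < 2*m+1 := ZMod.val_lt z
  unfold mg
  split <;> omega

lemma sgn_pm (z : Z m) : sgn m z = 1 ∨ sgn m z = -1 := by
  unfold sgn
  split
  · exact Or.inl rfl
  · exact Or.inr rfl

lemma decode (hm : 1 ≤ m) {s : Z m} (hs : s = 1 ∨ s = -1) {r : ℕ} (h1 : 1 ≤ r) (h2 : r ≤ m) :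
    sgn m (s * r) = s ∧ mg m (s * r) = r := by
  haveI : NeZero (2*m+1) := ⟨by omega⟩
  have hvr : ((r:ℕ) : Z m).val = r := ZMod.val_natCast_of_lt (by omega)
  rcases hs with rfl | rfl
  · rw [one_mul]
    unfold sgn mg
    rw [hvr]
    simp [h2]
  · have hneg : (-1 : Z m) * r = ((2*m+1 - r : ℕ) : Z m) := by
      rw [Nat.cast_sub (by omega), ZMod.natCast_self]
      ring
    have hv : ((-1 : Z m) * r).val = 2*m+1 - r := by
      rw [hneg, ZMod.val_natCast_of_lt (by omega)]
    unfold sgn mg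
    rw [hv]
    have hgt : ¬(2*m+1-r ≤ m) := by omega
    rw [if_neg hgt, if_neg hgt]
    exact ⟨rfl, by omega⟩

/-! ### Edges and straight segments in the torus -/

def dirOK (m : ℕ) (d : Vt m) : Prop := d = (1,0) ∨ d = (-1,0) ∨ d = (0,1) ∨ d = (0,-1)

lemma adj_dir (hm : 1 ≤ m) (p d : Vt m) (hd : dirOK m d) :
    (torus (2*m+1)).Adj p (p+d) := by
  have h1 := one_ne_zero' hm
  have hne : d ≠ 0 := by
    rcases hd with h|h|h|h <;> subst h <;>
      simp [Prod.ext_iff, h1, neg_eq_zero]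
  refine (SimpleGraph.fromRel_adj _ _ _).mpr ⟨?_, ?_⟩
  · intro h
    exact hne (by simpa using ((left_eq_add).mp h))
  · rcases hd with h|h|h|h <;> subst h
    · exact Or.inl (Or.inl (by abel))
    · refine Or.inr (Or.inl ?_)
      show p - (p + (-1,0)) = (1,0)
      abel_nf
      simp [Prod.ext_iff]
    · exact Or.inl (Or.inr (by abel))
    · refine Or.inr (Or.inr ?_)
      show p - (p + (0,-1)) = (0,1)
      abel_nf
      simp [Prod.ext_iff]

def seg (hm : 1 ≤ m) (d : Vt m) (hd : dirOK m d) : (k : ℕ) → (p : Vt m) →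
    (torus (2*m+1)).Walk p (p + k • d)
  | 0, p => SimpleGraph.Walk.nil.copy rfl (by simp)
  | (k+1), p => (SimpleGraph.Walk.cons (adj_dir hm p d hd) (seg hm d hd k (p+d))).copy rfl
      (by rw [succ_nsmul']; abel)

lemma seg_support (hm : 1 ≤ m) (d : Vt m) (hd : dirOK m d) : ∀ (k : ℕ) (p : Vt m),
    (seg hm d hd k p).support = (List.range (k+1)).map (fun j => p + j • d)
  | 0, p => by simp [seg, List.range_succ]
  | (k+1), p => by
    rw [seg, SimpleGraph.Walk.support_copy, SimpleGraph.Walk.support_cons,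
      seg_support hm d hd k (p+d)]
    conv_rhs => rw [List.range_succ_eq_map, List.map_cons, List.map_map]
    congr 1
    · simp
    · apply List.map_congr_left
      intro j _
      simp only [Function.comp_apply, succ_nsmul']
      abel

/-! ### The family of L-shaped paths -/

def qd (i : Fin (4*m)) : ℕ := i.val / m
def len (i : Fin (4*m)) : ℕ := i.val % m + 1
def sg1 (m : ℕ) (q : ℕ) : Z m := if q % 2 = 0 then 1 else -1
def tg1 (m : ℕ) (q : ℕ) : Z m := if q < 2 then 1 else -1
def sI (i : Fin (4*m)) : Z m := sg1 m (qd i)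
def tI (i : Fin (4*m)) : Z m := tg1 m (qd i)

lemma sg1_pm (q : ℕ) : sg1 m q = 1 ∨ sg1 m q = -1 := by
  unfold sg1
  split
  · exact Or.inl rfl
  · exact Or.inr rfl

lemma tg1_pm (q : ℕ) : tg1 m q = 1 ∨ tg1 m q = -1 := by
  unfold tg1
  split
  · exact Or.inl rfl
  · exact Or.inr rfl

lemma sI_pm (i : Fin (4*m)) : sI i = 1 ∨ sI i = -1 := sg1_pm _
lemma tI_pm (i : Fin (4*m)) : tI i = 1 ∨ tI i = -1 := tg1_pm _

lemma len_pos (i : Fin (4*m)) : 1 ≤ len i := Nat.le_add_left 1 _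

lemma len_le (hm : 1 ≤ m) (i : Fin (4*m)) : len i ≤ m := by
  have : i.val % m < m := Nat.mod_lt _ (by omega)
  unfold len
  omega

lemma qd_lt (hm : 1 ≤ m) (i : Fin (4*m)) : qd i < 4 := by
  have h := i.isLt
  unfold qd
  exact Nat.div_lt_of_lt_mul (by omega)

lemma dir1 (i : Fin (4*m)) : dirOK m ((sI i, 0) : Vt m) := by
  rcases sI_pm i with h | h <;> rw [h]
  · exact Or.inl rfl
  · exact Or.inr (Or.inl rfl)

lemma dir2 (i : Fin (4*m)) : dirOK m ((0, -tI i) : Vt m) := by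
  rcases tI_pm i with h | h <;> rw [h]
  · exact Or.inr (Or.inr (Or.inr rfl))
  · exact Or.inr (Or.inr (Or.inl (by norm_num)))

def ptA (v : Vt m) (i : Fin (4*m)) : Vt m := (v.1, v.2 + tI i * (len i : Z m))
def ptB (v : Vt m) (i : Fin (4*m)) : Vt m := (v.1 + sI i * (len i : Z m), v.2)

def pathW (hm : 1 ≤ m) (v : Vt m) (i : Fin (4*m)) :
    (torus (2*m+1)).Walk (ptA v i) (ptB v i) :=
  ((seg hm (sI i, 0) (dir1 i) (len i) (ptA v i)).append
     (seg hm (0, -tI i) (dir2 i) (len i) (ptA v i + (len i) • ((sI i, 0) : Vt m)))).copy rfl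
    (by
      simp only [ptA, ptB, Prod.smul_mk, Prod.mk_add_mk, Prod.mk.injEq, smul_zero,
        nsmul_eq_mul]
      constructor
      · ring
      · ring)

lemma mem_pathW_support (hm : 1 ≤ m) (v : Vt m) (i : Fin (4*m)) (x : Vt m) :
    x ∈ (pathW hm v i).support ↔
      ((∃ j, j ≤ len i ∧ x = (v.1 + sI i * j, v.2 + tI i * (len i : Z m))) ∨
       (∃ c, c < len i ∧ x = (v.1 + sI i * (len i : Z m), v.2 + tI i * c))) := by
  rw [pathW, SimpleGraph.Walk.support_copy, SimpleGraph.Walk.support_append,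
    seg_support, seg_support]
  rw [show (List.map (fun j => ptA v i + len i • ((sI i, 0) : Vt m) + j • ((0, -tI i) : Vt m))
        (List.range (len i + 1))).tail
      = List.map ((fun j => ptA v i + len i • ((sI i, 0) : Vt m) + j • ((0, -tI i) : Vt m))
          ∘ Nat.succ) (List.range (len i)) from by
    rw [List.range_succ_eq_map, List.map_cons, List.tail_cons, List.map_map]]
  rw [List.mem_append, List.mem_map, List.mem_map]
  have key1 : ∀ j : ℕ, ptA v i + j • ((sI i, 0) : Vt m)
      = (v.1 + sI i * j, v.2 + tI i * (len i : Z m)) := by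
    intro j
    simp only [ptA, Prod.smul_mk, Prod.mk_add_mk, smul_zero, nsmul_eq_mul, Prod.mk.injEq]
    constructor <;> ring
  have key2 : ∀ j : ℕ, ptA v i + (len i) • ((sI i, 0) : Vt m) + (Nat.succ j) • ((0, -tI i) : Vt m)
      = (v.1 + sI i * (len i : Z m), v.2 + tI i * (len i : Z m) - ((j:Z m)+1) * tI i) := by
    intro j
    simp only [ptA, Prod.smul_mk, Prod.mk_add_mk, smul_zero, nsmul_eq_mul, Prod.mk.injEq]
    constructor <;> (push_cast; ring)
  constructor
  · rintro (⟨j, hj, rfl⟩ | ⟨j, hj, rfl⟩)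
    · rw [List.mem_range] at hj
      exact Or.inl ⟨j, by omega, key1 j⟩
    · rw [List.mem_range] at hj
      refine Or.inr ⟨len i - 1 - j, by omega, ?_⟩
      rw [Function.comp_apply, key2 j]
      have hcast : ((len i - 1 - j : ℕ) : Z m) = (len i : Z m) - ((j : Z m)+1) := by
        rw [show len i - 1 - j = len i - (j+1) from by omega,
          Nat.cast_sub (by omega)]
        push_cast
        ring
      rw [hcast]
      simp only [Prod.mk.injEq]
      exact ⟨trivial, by ring⟩
  · rintro (⟨j, hj, rfl⟩ | ⟨c, hc, rfl⟩)
    · exact Or.inl ⟨j, List.mem_range.mpr (by omega), key1 j⟩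
    · refine Or.inr ⟨len i - 1 - c, List.mem_range.mpr (by omega), ?_⟩
      rw [Function.comp_apply, key2 (len i - 1 - c)]
      have hcast : ((len i - 1 - c : ℕ) : Z m) + 1 = (len i : Z m) - (c : Z m) := by
        rw [show (len i : Z m) - (c : Z m) = ((len i - c : ℕ) : Z m) from
            (by rw [Nat.cast_sub (by omega)]),
          show len i - c = (len i - 1 - c) + 1 from by omega]
        push_cast
        ring
      rw [hcast]
      simp only [Prod.mk.injEq]
      exact ⟨trivial, by ring⟩


lemma pathW_isPath (hm : 1 ≤ m) (v : Vt m) (i : Fin (4*m)) : (pathW hm v i).IsPath := by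
  have hlm := len_le hm i
  have hsp := sI_pm i
  have htp := tI_pm i
  rw [SimpleGraph.Walk.isPath_def, pathW, SimpleGraph.Walk.support_copy,
    SimpleGraph.Walk.support_append, seg_support, seg_support]
  rw [show (List.map (fun j => ptA v i + len i • ((sI i, 0) : Vt m) + j • ((0, -tI i) : Vt m))
        (List.range (len i + 1))).tail
      = List.map ((fun j => ptA v i + len i • ((sI i, 0) : Vt m) + j • ((0, -tI i) : Vt m))
          ∘ Nat.succ) (List.range (len i)) from by
    rw [List.range_succ_eq_map, List.map_cons, List.tail_cons, List.map_map]]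
  have key1 : ∀ j : ℕ, ptA v i + j • ((sI i, 0) : Vt m)
      = (v.1 + sI i * j, v.2 + tI i * (len i : Z m)) := by
    intro j
    simp only [ptA, Prod.smul_mk, Prod.mk_add_mk, smul_zero, nsmul_eq_mul, Prod.mk.injEq]
    constructor <;> ring
  have key2 : ∀ j : ℕ, ptA v i + (len i) • ((sI i, 0) : Vt m) + (Nat.succ j) • ((0, -tI i) : Vt m)
      = (v.1 + sI i * (len i : Z m), v.2 + tI i * (len i : Z m) - ((j:Z m)+1) * tI i) := by
    intro j
    simp only [ptA, Prod.smul_mk, Prod.mk_add_mk, smul_zero, nsmul_eq_mul, Prod.mk.injEq]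
    constructor <;> (push_cast; ring)
  apply List.Nodup.append
  · apply List.Nodup.map_on _ List.nodup_range
    intro a ha b hb hab
    rw [List.mem_range] at ha hb
    rw [key1 a, key1 b, Prod.mk.injEq] at hab
    have := add_left_cancel hab.1
    have := pm_mul_cancel hsp this
    exact cast_inj hm (by omega) (by omega) this
  · apply List.Nodup.map_on _ List.nodup_range
    intro a ha b hb hab
    rw [List.mem_range] at ha hb
    rw [Function.comp_apply, Function.comp_apply, key2 a, key2 b, Prod.mk.injEq] at hab
    have h2 := hab.2
    have h3 : tI i * ((a:Z m)+1) = tI i * ((b:Z m)+1) := by linear_combination -h2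
    have h4 : ((a:Z m)+1) = ((b:Z m)+1) := pm_mul_cancel htp h3
    have h5 : (((a+1 : ℕ)):Z m) = ((b+1 : ℕ):Z m) := by push_cast; exact h4
    have := cast_inj hm (a := a+1) (b := b+1) (by omega) (by omega) h5
    omega
  · intro x hx1 hx2
    rw [List.mem_map] at hx1 hx2
    obtain ⟨a, ha, rfl⟩ := hx1
    obtain ⟨b, hb, hbx⟩ := hx2
    rw [List.mem_range] at ha hb
    rw [Function.comp_apply, key2 b, key1 a, Prod.mk.injEq] at hbx
    have h2 := hbx.2
    have h3 : tI i * ((b:Z m)+1) = 0 := by linear_combination -h2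
    have h4 : ((b:Z m)+1) = 0 := pm_mul_cancel htp (by simpa using h3)
    have h5 : (((b+1:ℕ)) : Z m) = 0 := by push_cast; exact h4
    exact cast_ne_zero hm (a := b+1) (by omega) (by omega) h5


lemma add_ne_self {x y : Z m} (hy : y ≠ 0) : x + y ≠ x := by
  intro h
  exact hy ((add_eq_left).mp h)

lemma sI_len_ne (hm : 1 ≤ m) (i : Fin (4*m)) : sI i * (len i : Z m) ≠ 0 :=
  pm_mul_ne_zero (sI_pm i) (cast_ne_zero hm (len_pos i) (by have := len_le hm i; omega))

lemma tI_len_ne (hm : 1 ≤ m) (i : Fin (4*m)) : tI i * (len i : Z m) ≠ 0 :=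
  pm_mul_ne_zero (tI_pm i) (cast_ne_zero hm (len_pos i) (by have := len_le hm i; omega))

lemma internal_struct (hm : 1 ≤ m) (v : Vt m) (i : Fin (4*m)) {x : Vt m}
    (hx : x ∈ (pathW hm v i).support) (hxa : x ≠ ptA v i) (hxb : x ≠ ptB v i) :
    x.1 ≠ v.1 ∧ x.2 ≠ v.2 ∧ sgn m (x.1 - v.1) = sI i ∧ sgn m (x.2 - v.2) = tI i ∧
      max (mg m (x.1 - v.1)) (mg m (x.2 - v.2)) = len i := by
  have hlm := len_le hm i
  have h1l := len_pos i
  have hsp := sI_pm i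
  have htp := tI_pm i
  rcases (mem_pathW_support hm v i x).mp hx with ⟨j, hj, rfl⟩ | ⟨c, hc, rfl⟩
  · have hj1 : 1 ≤ j := by
      rcases Nat.eq_zero_or_pos j with rfl | h
      · exact absurd (by simp [ptA]) hxa
      · exact h
    have hjz : ((j:ℕ) : Z m) ≠ 0 := cast_ne_zero hm hj1 (by omega)
    have e1 : (v.1 + sI i * (j : Z m), v.2 + tI i * (len i : Z m)).1 - v.1
        = sI i * (j : Z m) := by simp
    have e2 : (v.1 + sI i * (j : Z m), v.2 + tI i * (len i : Z m)).2 - v.2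
        = tI i * (len i : Z m) := by simp
    rw [e1, e2]
    obtain ⟨hd1, hd2⟩ := decode hm hsp hj1 (by omega)
    obtain ⟨hd3, hd4⟩ := decode hm htp h1l hlm
    refine ⟨add_ne_self (pm_mul_ne_zero hsp hjz), add_ne_self (tI_len_ne hm i),
      hd1, hd3, ?_⟩
    rw [hd2, hd4]
    omega
  · have hc1 : 1 ≤ c := by
      rcases Nat.eq_zero_or_pos c with rfl | h
      · exact absurd (by simp [ptB]) hxb
      · exact h
    have hcz : ((c:ℕ) : Z m) ≠ 0 := cast_ne_zero hm hc1 (by omega)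
    have e1 : (v.1 + sI i * (len i : Z m), v.2 + tI i * (c : Z m)).1 - v.1
        = sI i * (len i : Z m) := by simp
    have e2 : (v.1 + sI i * (len i : Z m), v.2 + tI i * (c : Z m)).2 - v.2
        = tI i * (c : Z m) := by simp
    rw [e1, e2]
    obtain ⟨hd1, hd2⟩ := decode hm hsp h1l hlm
    obtain ⟨hd3, hd4⟩ := decode hm htp hc1 (by omega)
    refine ⟨add_ne_self (sI_len_ne hm i), add_ne_self (pm_mul_ne_zero htp hcz),
      hd1, hd3, ?_⟩
    rw [hd2, hd4]
    omega

lemma q_inj (hm : 1 ≤ m) {q q' : ℕ} (hq : q < 4) (hq' : q' < 4)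
    (hs : sg1 m q = sg1 m q') (ht : tg1 m q = tg1 m q') : q = q' := by
  have h12 := one_ne_neg_one hm
  unfold sg1 at hs
  unfold tg1 at ht
  split_ifs at hs ht <;>
    first
      | omega
      | exact absurd hs h12
      | exact absurd hs.symm h12
      | exact absurd ht h12
      | exact absurd ht.symm h12

lemma index_eq {i j : Fin (4*m)} (hq : qd i = qd j) (hl : len i = len j) : i = j := by
  have h1 := Nat.div_add_mod i.val m
  have h2 := Nat.div_add_mod j.val m
  unfold qd at hq
  unfold len at hl
  apply Fin.ext
  rw [← h1, ← h2, hq, show i.val % m = j.val % m from by omega]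

lemma encode (hm : 1 ≤ m) {s t : Z m} (hs : s = 1 ∨ s = -1) (ht : t = 1 ∨ t = -1) :
    ∃ q, q < 4 ∧ sg1 m q = s ∧ tg1 m q = t := by
  rcases hs with rfl | rfl <;> rcases ht with rfl | rfl
  · exact ⟨0, by omega, by simp [sg1], by simp [tg1]⟩
  · exact ⟨2, by omega, by simp [sg1], by simp [tg1]⟩
  · exact ⟨1, by omega, by simp [sg1], by simp [tg1]⟩
  · exact ⟨3, by omega, by simp [sg1], by simp [tg1]⟩

end TorusAux

open TorusAux in
theorem disjoint_paths_rows_cols (m : ℕ) (hm : 1 ≤ m)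
    (v : ZMod (2 * m + 1) × ZMod (2 * m + 1))
    (R C : Set (ZMod (2 * m + 1) × ZMod (2 * m + 1)))
    (hR : R = {p | p.1 = v.1}) (hC : C = {p | p.2 = v.2}) :
    ∃ (a b : Fin (4 * m) → ZMod (2 * m + 1) × ZMod (2 * m + 1))
      (P : ∀ i, (torus (2 * m + 1)).Walk (a i) (b i)),
      (∀ i, a i ∈ R \ {v}) ∧
      (∀ i, b i ∈ C \ {v}) ∧
      (∀ i, (P i).IsPath) ∧
      (∀ i x, x ∈ (P i).support → x ≠ a i → x ≠ b i → x ∉ R ∪ C) ∧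
      (∀ i j, i ≠ j → ∀ x, x ∈ (P i).support → x ≠ a i → x ≠ b i →
        x ∈ (P j).support → x ≠ a j → x ≠ b j → False) ∧
      (∀ x, x ∉ R ∪ C → ∃ i, x ∈ (P i).support) := by
  subst hR hC
  refine ⟨fun i => ptA v i, fun i => ptB v i, fun i => pathW hm v i,
    ?_, ?_, ?_, ?_, ?_, ?_⟩
  · intro i
    refine ⟨rfl, ?_⟩
    simp only [Set.mem_singleton_iff]
    intro h
    have h2 := congrArg Prod.snd h
    simp only [ptA] at h2
    exact add_ne_self (tI_len_ne hm i) h2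
  · intro i
    refine ⟨rfl, ?_⟩
    simp only [Set.mem_singleton_iff]
    intro h
    have h2 := congrArg Prod.fst h
    simp only [ptB] at h2
    exact add_ne_self (sI_len_ne hm i) h2
  · intro i
    exact pathW_isPath hm v i
  · intro i x hx hxa hxb
    obtain ⟨h1, h2, -⟩ := internal_struct hm v i hx hxa hxb
    intro hmem
    rcases hmem with h | h
    · exact h1 h
    · exact h2 h
  · intro i j hij x hxi hxia hxib hxj hxja hxjb
    obtain ⟨-, -, hsi, hti, hmi⟩ := internal_struct hm v i hxi hxia hxib
    obtain ⟨-, -, hsj, htj, hmj⟩ := internal_struct hm v j hxj hxja hxjb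
    have hq : qd i = qd j :=
      q_inj hm (qd_lt hm i) (qd_lt hm j) (hsi.symm.trans hsj) (hti.symm.trans htj)
    have hl : len i = len j := hmi ▸ hmj
    exact hij (index_eq hq hl)
  · intro x hx
    have hx1 : x.1 ≠ v.1 := fun h => hx (Or.inl h)
    have hx2 : x.2 ≠ v.2 := fun h => hx (Or.inr h)
    have hw1 : x.1 - v.1 ≠ 0 := sub_ne_zero.mpr hx1
    have hw2 : x.2 - v.2 ≠ 0 := sub_ne_zero.mpr hx2
    obtain ⟨hr1, hrm⟩ := mg_bounds hm hw1
    obtain ⟨hc1, hcm⟩ := mg_bounds hm hw2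
    obtain ⟨q, hq4, hqs, hqt⟩ := encode hm (sgn_pm (x.1 - v.1)) (sgn_pm (x.2 - v.2))
    set r := mg m (x.1 - v.1) with hrdef
    set c := mg m (x.2 - v.2) with hcdef
    have hq3m : q * m ≤ 3 * m := Nat.mul_le_mul_right m (by omega)
    refine ⟨⟨q * m + (max r c - 1), by omega⟩, ?_⟩
    set idx : Fin (4*m) := ⟨q * m + (max r c - 1), by omega⟩ with hidx
    have hqd : qd idx = q := by
      show (q * m + (max r c - 1)) / m = q
      rw [mul_comm, Nat.mul_add_div (by omega), Nat.div_eq_of_lt (by omega)]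
      omega
    have hlen : len idx = max r c := by
      show (q * m + (max r c - 1)) % m + 1 = max r c
      rw [mul_comm, Nat.mul_add_mod, Nat.mod_eq_of_lt (by omega)]
      omega
    have hsidx : sI idx = sgn m (x.1 - v.1) := by rw [sI, hqd, hqs]
    have htidx : tI idx = sgn m (x.2 - v.2) := by rw [tI, hqd, hqt]
    rw [mem_pathW_support hm v idx x]
    rcases le_or_gt r c with hrc | hcr
    · -- vertical part, j = r, len = c
      refine Or.inl ⟨r, by omega, ?_⟩
      have hlc : len idx = c := by omega
      rw [hsidx, htidx, hlc]
      have e1 : v.1 + sgn m (x.1 - v.1) * (r : ZMod (2*m+1)) = x.1 := by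
        rw [hrdef, sgn_mul_mg]
        ring
      have e2 : v.2 + sgn m (x.2 - v.2) * (c : ZMod (2*m+1)) = x.2 := by
        rw [hcdef, sgn_mul_mg]
        ring
      rw [e1, e2]
    · -- horizontal part, c < len = r
      refine Or.inr ⟨c, by omega, ?_⟩
      have hlr : len idx = r := by omega
      rw [hsidx, htidx, hlr]
      have e1 : v.1 + sgn m (x.1 - v.1) * (r : ZMod (2*m+1)) = x.1 := by
        rw [hrdef, sgn_mul_mg]
        ring
      have e2 : v.2 + sgn m (x.2 - v.2) * (c : ZMod (2*m+1)) = x.2 := by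
        rw [hcdef, sgn_mul_mg]
        ring
      rw [e1, e2]
end
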